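/- arXiv:1807.09843 — 7 statements merged into one kernel-verified Lean document; each statement's English description precedes it below -/
import Mathlib

section
/- Let (g, δ) be a Lie bialgebra and t ∈ ∧²g a twisting element, i.e. δ(t) + (1/2)[t,t] = 0 (where δ is extended as a derivation to ∧²g and [t,t] ∈ ∧³g is the algebraic Schouten bracket). Then the map δ_t(x) = δ(x) + [t, x] (with [t,x] = −ad_x(t)) is again a Lie bialgebra structure on g, i.e. δ_t is a 1-cocycle and its dual map is a Lie bracket on g*. -/
/- STATEMENT 2: Twisting a Lie bialgebra (g, δ) by a twisting element t ∈ ∧²g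
(with δ(t) + (1/2)[t,t] = 0) yields again a Lie bialgebra structure
δ_t(x) = δ(x) + [t,x] = δ(x) − ad_x(t). -/

open TensorProduct

section defs

variable (K : Type*) [Field K] [CharZero K]
variable (L : Type*) [LieRing L] [LieAlgebra K L]

attribute [local instance 100] LieRing.ofAssociativeRing

/-- `adT t : z ↦ ⁅z, t⁆`, the adjoint action of `L` on `L ⊗ L` with `t` fixed. -/
noncomputable def adT (t : L ⊗[K] L) : L →ₗ[K] L ⊗[K] L :=
  (LieModule.toEnd K L (L ⊗[K] L)).toLinearMap.flip t

/-- the cyclic permutation `a ⊗ b ⊗ c ↦ b ⊗ c ⊗ a` of `L ⊗ L ⊗ L`. -/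
noncomputable def cyc : L ⊗[K] (L ⊗[K] L) →ₗ[K] L ⊗[K] (L ⊗[K] L) :=
  (TensorProduct.assoc K L L L).toLinearMap ∘ₗ (TensorProduct.comm K L (L ⊗[K] L)).toLinearMap

/-- the transposition of the last two factors of `L ⊗ L ⊗ L`. -/
noncomputable def tau23 : L ⊗[K] (L ⊗[K] L) →ₗ[K] L ⊗[K] (L ⊗[K] L) :=
  LinearMap.lTensor L (TensorProduct.comm K L L).toLinearMap

/-- the antisymmetrizer `Σ_{σ ∈ S₃} sgn(σ) σ` of `L ⊗ L ⊗ L`. -/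
noncomputable def Alt3 : L ⊗[K] (L ⊗[K] L) →ₗ[K] L ⊗[K] (L ⊗[K] L) :=
  LinearMap.id + cyc K L + cyc K L ∘ₗ cyc K L
    - tau23 K L - tau23 K L ∘ₗ cyc K L - tau23 K L ∘ₗ cyc K L ∘ₗ cyc K L

/-- `(δ ⊗ id)` reassociated to land in `L ⊗ (L ⊗ L)`. -/
noncomputable def Dmap (δ : L →ₗ[K] L ⊗[K] L) : L ⊗[K] L →ₗ[K] L ⊗[K] (L ⊗[K] L) :=
  (TensorProduct.assoc K L L L).toLinearMap ∘ₗ LinearMap.rTensor L δ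

/-- co-Jacobi identity for a cobracket `δ`: the cyclic sum of `(δ ⊗ id) ∘ δ` vanishes;
equivalently the dual map of `δ` is a Lie bracket on the dual space. -/
def coJacobi (δ : L →ₗ[K] L ⊗[K] L) : Prop :=
  ∀ z : L, Dmap K L δ (δ z) + cyc K L (Dmap K L δ (δ z))
    + cyc K L (cyc K L (Dmap K L δ (δ z))) = 0

/-- skew-symmetry of a cobracket: `δ` takes values in `∧²g ⊂ g ⊗ g`. -/
def skewCobracket (δ : L →ₗ[K] L ⊗[K] L) : Prop :=
  ∀ z : L, TensorProduct.comm K L L (δ z) = - δ z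

/-- the 1-cocycle condition for `δ`. -/
def cocycle (δ : L →ₗ[K] L ⊗[K] L) : Prop :=
  ∀ z w : L, δ ⁅z, w⁆ = ⁅z, δ w⁆ - ⁅w, δ z⁆

/-- the classical Yang–Baxter expression `[t₁₂,t₁₃] + [t₁₂,t₂₃] + [t₁₃,t₂₃]` of an element
with components `t = Σ_p c p ⊗ d p`. -/
noncomputable def cyb {κ : Type*} [Fintype κ] (c d : κ → L) : L ⊗[K] (L ⊗[K] L) :=
  ∑ p, ∑ q, (⁅c p, c q⁆ ⊗ₜ[K] (d p ⊗ₜ[K] d q) + c p ⊗ₜ[K] (⁅d p, c q⁆ ⊗ₜ[K] d q)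
    + c p ⊗ₜ[K] (c q ⊗ₜ[K] ⁅d p, d q⁆))

end defs

/-
Skewness and the cocycle property pass to δ_t because z ↦ ⁅z, t⁆ is the coboundary of the skew
element t. For co-Jacobi, write J(φ)(z) for the cyclic sum of (φ ⊗ id)(φ z). In the expansion of
J(δ - ad t)(z), the term J(δ)(z) vanishes, the cocycle property of δ turns the two cross terms
into -⁅z, C⁆ with C the cyclic sum of (δ ⊗ id)(t), and J(ad t)(z) = -⁅z, CYB(t)⁆. Since δ is
skew, the antisymmetrizer of (δ ⊗ id)(t) is 2C, so the twist condition says C = -CYB(t) and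
everything cancels.

Each identity that needs the skewness of t = Σᵢ aᵢ ∧ bᵢ becomes a multilinear identity in free
variables, because exchanging the two tensor factors of a component of t only costs a sign.
-/

lemma eq_zero_of_self_eq_neg (K : Type*) [Field K] [CharZero K] {M : Type*} [AddCommGroup M]
    [Module K M] {v : M} (h : v = -v) : v = 0 := by
  have h2 : (2 : K) • v = 0 := by
    rw [two_smul]
    nth_rewrite 1 [h]
    exact neg_add_cancel v
  exact (smul_eq_zero.mp h2).resolve_left two_ne_zero

section SumElim

variable {ι V M : Type*} [Fintype ι] [Neg V] [AddCommGroup M]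

lemma sum_elim_eq_zero_of_symm (a b : ι → V) (F : V → V → M)
    (hneg : ∀ x y, F (-x) y = -F x y) (hsymm : ∀ x y, F y x = F x y) :
    ∑ p, F (Sum.elim a (fun i => -(b i)) p) (Sum.elim b a p) = 0 := by
  rw [Fintype.sum_sum_type, ← Finset.sum_add_distrib]
  exact Finset.sum_eq_zero fun i _ => by
    simp only [Sum.elim_inl, Sum.elim_inr, hneg, hsymm (a i), add_neg_cancel]

lemma sum_sum_elim_eq_zero_of_alternation (K : Type*) [Field K] [CharZero K] [Module K M]
    (a b : ι → V) (F : V → V → V → V → M)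
    (hneg₁ : ∀ x y u v, F (-x) y u v = -F x y u v) (hneg₃ : ∀ x y u v, F x y (-u) v = -F x y u v)
    (hF : ∀ x y u v, F x y u v - F y x u v - F x y v u + F y x v u
      + (F u v x y - F v u x y - F u v y x + F v u y x) = 0) :
    ∑ p, ∑ q, F (Sum.elim a (fun i => -(b i)) p) (Sum.elim b a p)
      (Sum.elim a (fun i => -(b i)) q) (Sum.elim b a q) = 0 := by
  set A : ι → ι → M := fun i j => F (a i) (b i) (a j) (b j) - F (b i) (a i) (a j) (b j)
    - F (a i) (b i) (b j) (a j) + F (b i) (a i) (b j) (a j) with hA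
  have hX : ∑ p, ∑ q, F (Sum.elim a (fun i => -(b i)) p) (Sum.elim b a p)
      (Sum.elim a (fun i => -(b i)) q) (Sum.elim b a q) = ∑ i, ∑ j, A i j := by
    simp only [Fintype.sum_sum_type, ← Finset.sum_add_distrib]
    refine Finset.sum_congr rfl fun i _ => Finset.sum_congr rfl fun j _ => ?_
    simp only [Sum.elim_inl, Sum.elim_inr, hneg₁, hneg₃, neg_neg, hA]
    abel
  have hA_neg : ∑ i, ∑ j, A i j = -∑ i, ∑ j, A i j := by
    conv_rhs => rw [Finset.sum_comm]
    simp only [← Finset.sum_neg_distrib]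
    exact Finset.sum_congr rfl fun i _ => Finset.sum_congr rfl fun j _ =>
      eq_neg_of_add_eq_zero_left (hF _ _ _ _)
  rw [hX]
  exact eq_zero_of_self_eq_neg K hA_neg

end SumElim

section TwistedCobracket

variable {K : Type*} [Field K] {L : Type*} [LieRing L] [LieAlgebra K L]

variable (K L) in
noncomputable def cycSum : L ⊗[K] (L ⊗[K] L) →ₗ[K] L ⊗[K] (L ⊗[K] L) :=
  LinearMap.id + cyc K L + cyc K L ∘ₗ cyc K L

variable (K L) in
noncomputable def tmulAssoc (w : L) : L ⊗[K] L →ₗ[K] L ⊗[K] (L ⊗[K] L) :=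
  (TensorProduct.assoc K L L L).toLinearMap ∘ₗ (TensorProduct.mk K (L ⊗[K] L) L).flip w

@[simp] lemma cyc_tmul (x y w : L) :
    cyc K L (x ⊗ₜ[K] (y ⊗ₜ[K] w)) = y ⊗ₜ[K] (w ⊗ₜ[K] x) := rfl

@[simp] lemma tau23_tmul (x y w : L) :
    tau23 K L (x ⊗ₜ[K] (y ⊗ₜ[K] w)) = x ⊗ₜ[K] (w ⊗ₜ[K] y) := rfl

@[simp] lemma tmulAssoc_tmul (w x y : L) :
    tmulAssoc K L w (x ⊗ₜ[K] y) = x ⊗ₜ[K] (y ⊗ₜ[K] w) := rfl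

@[simp] lemma adT_apply (t : L ⊗[K] L) (z : L) : adT K L t z = ⁅z, t⁆ := rfl

lemma cycSum_apply (u : L ⊗[K] (L ⊗[K] L)) :
    cycSum K L u = u + cyc K L u + cyc K L (cyc K L u) := rfl

lemma Dmap_tmul (φ : L →ₗ[K] L ⊗[K] L) (x y : L) :
    Dmap K L φ (x ⊗ₜ[K] y) = tmulAssoc K L y (φ x) := rfl

lemma Dmap_sub (φ ψ : L →ₗ[K] L ⊗[K] L) (u : L ⊗[K] L) :
    Dmap K L (φ - ψ) u = Dmap K L φ u - Dmap K L ψ u := by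
  simp [Dmap, LinearMap.rTensor_sub]

lemma comm_lie (z : L) (s : L ⊗[K] L) :
    TensorProduct.comm K L L ⁅z, s⁆ = ⁅z, TensorProduct.comm K L L s⁆ := by
  suffices (TensorProduct.comm K L L).toLinearMap ∘ₗ LieModule.toEnd K L _ z
      = LieModule.toEnd K L _ z ∘ₗ (TensorProduct.comm K L L).toLinearMap from
    LinearMap.congr_fun this s
  exact TensorProduct.ext' fun x y => by simp [LieModule.lie_tmul_right, add_comm]

lemma cyc_lie (z : L) (s : L ⊗[K] (L ⊗[K] L)) : cyc K L ⁅z, s⁆ = ⁅z, cyc K L s⁆ := by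
  suffices cyc K L ∘ₗ LieModule.toEnd K L _ z = LieModule.toEnd K L _ z ∘ₗ cyc K L from
    LinearMap.congr_fun this s
  refine TensorProduct.ext_threefold' fun x y w => ?_
  simp [LieModule.lie_tmul_right, tmul_add]
  abel

lemma cycSum_lie (z : L) (s : L ⊗[K] (L ⊗[K] L)) :
    cycSum K L ⁅z, s⁆ = ⁅z, cycSum K L s⁆ := by
  simp only [cycSum_apply, cyc_lie, lie_add]

lemma lie_tmulAssoc (z w : L) (u : L ⊗[K] L) :
    ⁅z, tmulAssoc K L w u⁆ = tmulAssoc K L w ⁅z, u⁆ + tmulAssoc K L ⁅z, w⁆ u := by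
  suffices LieModule.toEnd K L _ z ∘ₗ tmulAssoc K L w
      = tmulAssoc K L w ∘ₗ LieModule.toEnd K L _ z + tmulAssoc K L ⁅z, w⁆ from
    LinearMap.congr_fun this u
  refine TensorProduct.ext' fun x y => ?_
  simp [LieModule.lie_tmul_right, tmul_add]
  abel

lemma skewCobracket.sub {δ ε : L →ₗ[K] L ⊗[K] L} (hδ : skewCobracket K L δ)
    (hε : skewCobracket K L ε) : skewCobracket K L (δ - ε) := fun z => by
  simp only [LinearMap.sub_apply, map_sub, hδ z, hε z, neg_sub_neg, neg_sub]

lemma cocycle.sub {δ ε : L →ₗ[K] L ⊗[K] L} (hδ : cocycle K L δ) (hε : cocycle K L ε) :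
    cocycle K L (δ - ε) := fun z w => by
  simp only [LinearMap.sub_apply, hδ z w, hε z w, lie_sub]
  abel

lemma skewCobracket_adT {t : L ⊗[K] L} (ht : TensorProduct.comm K L L t = -t) :
    skewCobracket K L (adT K L t) := fun z => by
  rw [adT_apply, comm_lie, ht, lie_neg]

lemma cocycle_adT (t : L ⊗[K] L) : cocycle K L (adT K L t) := fun z w => by
  simp only [adT_apply, lie_lie]

section Skew

variable [CharZero K]

lemma apply_eq_zero_of_comm_eq_neg {M : Type*} [AddCommGroup M] [Module K M]
    (G : L ⊗[K] L →ₗ[K] M) (hG : ∀ x y : L, G (y ⊗ₜ[K] x) = G (x ⊗ₜ[K] y))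
    {u : L ⊗[K] L} (hu : TensorProduct.comm K L L u = -u) : G u = 0 := by
  have hcomm : G ∘ₗ (TensorProduct.comm K L L).toLinearMap = G :=
    TensorProduct.ext' fun x y => hG x y
  have h : G u = -G u := by
    rw [← map_neg, ← hu]
    exact (LinearMap.congr_fun hcomm u).symm
  exact eq_zero_of_self_eq_neg K h

lemma Alt3_tmulAssoc_of_comm_eq_neg {v : L ⊗[K] L} (hv : TensorProduct.comm K L L v = -v)
    (w : L) : Alt3 K L (tmulAssoc K L w v) = (2 : K) • cycSum K L (tmulAssoc K L w v) := by
  rw [← sub_eq_zero]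
  refine apply_eq_zero_of_comm_eq_neg
    (Alt3 K L ∘ₗ tmulAssoc K L w - (2 : K) • (cycSum K L ∘ₗ tmulAssoc K L w)) (fun x y => ?_) hv
  simp only [LinearMap.sub_apply, LinearMap.comp_apply, tmulAssoc_tmul,
    Alt3, cycSum, LinearMap.add_apply, LinearMap.id_apply, cyc_tmul, tau23_tmul, two_smul]
  abel

end Skew

section Components

variable {κ : Type*} [Fintype κ] (c d : κ → L)

lemma Dmap_lie_of_cocycle {δ : L →ₗ[K] L ⊗[K] L} (hδ : cocycle K L δ) (z : L) :
    Dmap K L δ ⁅z, ∑ p, c p ⊗ₜ[K] d p⁆ = ⁅z, Dmap K L δ (∑ p, c p ⊗ₜ[K] d p)⁆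
      - ∑ p, tmulAssoc K L (d p) ⁅c p, δ z⁆ := by
  simp only [lie_sum, map_sum, ← Finset.sum_sub_distrib]
  refine Finset.sum_congr rfl fun p _ => ?_
  rw [LieModule.lie_tmul_right, map_add, Dmap_tmul, Dmap_tmul, Dmap_tmul, hδ z (c p), map_sub,
    lie_tmulAssoc]
  abel

lemma Alt3_Dmap_of_skewCobracket [CharZero K] {δ : L →ₗ[K] L ⊗[K] L} (hδ : skewCobracket K L δ) :
    Alt3 K L (Dmap K L δ (∑ p, c p ⊗ₜ[K] d p))
      = (2 : K) • cycSum K L (Dmap K L δ (∑ p, c p ⊗ₜ[K] d p)) := by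
  simp only [map_sum, Finset.smul_sum, Dmap_tmul]
  exact Finset.sum_congr rfl fun p _ => Alt3_tmulAssoc_of_comm_eq_neg (hδ (c p)) (d p)

end Components

section Wedge

variable {ι : Type*} [Fintype ι] (a b : ι → L)

lemma sum_sub_tmul_eq_sum_elim :
    ∑ i, (a i ⊗ₜ[K] b i - b i ⊗ₜ[K] a i)
      = ∑ p, Sum.elim a (fun i => -(b i)) p ⊗ₜ[K] Sum.elim b a p := by
  simp [Fintype.sum_sum_type, sub_eq_add_neg, Finset.sum_add_distrib, neg_tmul]

lemma comm_sum_sub_tmul :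
    TensorProduct.comm K L L (∑ i, (a i ⊗ₜ[K] b i - b i ⊗ₜ[K] a i))
      = -∑ i, (a i ⊗ₜ[K] b i - b i ⊗ₜ[K] a i) := by
  simp

variable [CharZero K] {t : L ⊗[K] L}

lemma cycSum_sum_tmulAssoc_lie (ht : t = ∑ i, (a i ⊗ₜ[K] b i - b i ⊗ₜ[K] a i))
    {w : L ⊗[K] L} (hw : TensorProduct.comm K L L w = -w) :
    cycSum K L (∑ p, tmulAssoc K L (Sum.elim b a p) ⁅Sum.elim a (fun i => -(b i)) p, w⁆)
      = cycSum K L (Dmap K L (adT K L t) w) := by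
  rw [← sub_eq_zero, ← map_sub]
  let G : L ⊗[K] L →ₗ[K] L ⊗[K] (L ⊗[K] L) := cycSum K L ∘ₗ
    ((∑ p, tmulAssoc K L (Sum.elim b a p) ∘ₗ
      LieModule.toEnd K L _ (Sum.elim a (fun i => -(b i)) p)) - Dmap K L (adT K L t))
  have hG : ∀ u, G u = cycSum K L
      (∑ p, tmulAssoc K L (Sum.elim b a p) ⁅Sum.elim a (fun i => -(b i)) p, u⁆
        - Dmap K L (adT K L t) u) := fun u => by
    simp only [G, LinearMap.comp_apply, LinearMap.sub_apply, LinearMap.sum_apply,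
      LieModule.toEnd_apply_apply]
  rw [← hG]
  refine apply_eq_zero_of_comm_eq_neg G (fun x y => ?_) hw
  let E : L → L → L → L → L ⊗[K] (L ⊗[K] L) := fun x y α β =>
    cycSum K L (tmulAssoc K L β ⁅α, x ⊗ₜ[K] y⁆ - tmulAssoc K L y ⁅x, α ⊗ₜ[K] β⁆)
  have hGE : ∀ x y, G (x ⊗ₜ[K] y)
      = ∑ p, E x y (Sum.elim a (fun i => -(b i)) p) (Sum.elim b a p) := fun x y => by
    rw [hG, Dmap_tmul, adT_apply, ht, sum_sub_tmul_eq_sum_elim, lie_sum, map_sum,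
      ← Finset.sum_sub_distrib, map_sum]
  rw [hGE, hGE, ← sub_eq_zero, ← Finset.sum_sub_distrib]
  refine sum_elim_eq_zero_of_symm a b (fun α β => E y x α β - E x y α β)
    (fun α β => ?_) (fun α β => ?_)
  · simp only [E, neg_lie, lie_neg, neg_tmul, map_neg, map_sub]
    abel
  · simp only [E, cycSum_apply, tmulAssoc_tmul, LieModule.lie_tmul_right, map_add, map_sub,
      cyc_tmul, ← lie_skew x α, ← lie_skew x β, ← lie_skew y α, ← lie_skew y β, tmul_neg,
      neg_tmul]
    abel

lemma cycSum_Dmap_adT_lie (ht : t = ∑ i, (a i ⊗ₜ[K] b i - b i ⊗ₜ[K] a i)) (z : L) :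
    cycSum K L (Dmap K L (adT K L t) ⁅z, t⁆)
      = -⁅z, cyb K L (Sum.elim a fun i => -(b i)) (Sum.elim b a)⁆ := by
  rw [← add_eq_zero_iff_eq_neg]
  let F : L → L → L → L → L ⊗[K] (L ⊗[K] L) := fun x y u v =>
    cycSum K L (tmulAssoc K L y ⁅⁅z, x⁆, u ⊗ₜ[K] v⁆ + tmulAssoc K L ⁅z, y⁆ ⁅x, u ⊗ₜ[K] v⁆)
      + ⁅z, ⁅x, u⁆ ⊗ₜ[K] (y ⊗ₜ[K] v) + x ⊗ₜ[K] (⁅y, u⁆ ⊗ₜ[K] v) + x ⊗ₜ[K] (u ⊗ₜ[K] ⁅y, v⁆)⁆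
  have hF : cycSum K L (Dmap K L (adT K L t) ⁅z, t⁆)
      + ⁅z, cyb K L (Sum.elim a fun i => -(b i)) (Sum.elim b a)⁆
      = ∑ p, ∑ q, F (Sum.elim a (fun i => -(b i)) p) (Sum.elim b a p)
          (Sum.elim a (fun i => -(b i)) q) (Sum.elim b a q) := by
    simp only [F, ht, sum_sub_tmul_eq_sum_elim, cyb, lie_sum, map_sum, LieModule.lie_tmul_right,
      map_add, lie_add, Dmap_tmul, adT_apply, Finset.sum_add_distrib]
  rw [hF]
  refine sum_sum_elim_eq_zero_of_alternation K a b F (fun x y u v => ?_) (fun x y u v => ?_)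
    (fun x y u v => ?_)
  · simp only [F, neg_lie, lie_neg, neg_tmul, map_neg, map_add, lie_add, neg_add]
  · simp only [F, lie_neg, neg_tmul, tmul_neg, map_neg, map_add, lie_add, neg_add]
  · have hz : ∀ α β : L, ⁅α, ⁅z, β⁆⁆ = -⁅⁅z, β⁆, α⁆ := fun α β => (lie_skew _ _).symm
    simp only [F, cycSum_apply, tmulAssoc_tmul, LieModule.lie_tmul_right, map_add, cyc_tmul,
      tmul_add, add_tmul, leibniz_lie, ← lie_skew u x, ← lie_skew v x, ← lie_skew u y,
      ← lie_skew v y, hz, tmul_neg, neg_tmul, lie_add]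
    abel

lemma cycSum_Dmap_lie_add_cycSum_Dmap_adT {δ : L →ₗ[K] L ⊗[K] L} (hskew : skewCobracket K L δ)
    (hcoc : cocycle K L δ) (ht : t = ∑ i, (a i ⊗ₜ[K] b i - b i ⊗ₜ[K] a i)) (z : L) :
    cycSum K L (Dmap K L δ ⁅z, t⁆) + cycSum K L (Dmap K L (adT K L t) (δ z))
      = ⁅z, cycSum K L (Dmap K L δ t)⁆ := by
  rw [← cycSum_sum_tmulAssoc_lie a b ht (hskew z), ht, sum_sub_tmul_eq_sum_elim,
    Dmap_lie_of_cocycle _ _ hcoc, map_sub, cycSum_lie, sub_add_cancel]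

lemma cycSum_Dmap_eq_neg_cyb {δ : L →ₗ[K] L ⊗[K] L} (hskew : skewCobracket K L δ)
    (ht : t = ∑ i, (a i ⊗ₜ[K] b i - b i ⊗ₜ[K] a i))
    (htw : Alt3 K L (Dmap K L δ t)
      + (2 : K) • cyb K L (Sum.elim a fun i => -(b i)) (Sum.elim b a) = 0) :
    cycSum K L (Dmap K L δ t) = -cyb K L (Sum.elim a fun i => -(b i)) (Sum.elim b a) := by
  rw [ht, sum_sub_tmul_eq_sum_elim, Alt3_Dmap_of_skewCobracket _ _ hskew, ← smul_add] at htw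
  rw [ht, sum_sub_tmul_eq_sum_elim]
  exact eq_neg_of_add_eq_zero_left ((smul_eq_zero.mp htw).resolve_left two_ne_zero)

lemma coJacobi_sub_adT {δ : L →ₗ[K] L ⊗[K] L} (hskew : skewCobracket K L δ)
    (hcoc : cocycle K L δ) (hcoj : coJacobi K L δ)
    (ht : t = ∑ i, (a i ⊗ₜ[K] b i - b i ⊗ₜ[K] a i))
    (htw : cycSum K L (Dmap K L δ t) = -cyb K L (Sum.elim a fun i => -(b i)) (Sum.elim b a)) :
    coJacobi K L (δ - adT K L t) := fun z => by
  have hJ : cycSum K L (Dmap K L δ (δ z)) = 0 := hcoj z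
  have hcross := cycSum_Dmap_lie_add_cycSum_Dmap_adT a b hskew hcoc ht z
  rw [← cycSum_apply]
  simp only [LinearMap.sub_apply, adT_apply, Dmap_sub, map_sub]
  rw [hJ, cycSum_Dmap_adT_lie a b ht z, eq_sub_of_add_eq hcross, htw, lie_neg]
  abel

end Wedge

end TwistedCobracket

theorem stmt2_general {K : Type*} [Field K] [CharZero K]
    {L : Type*} [LieRing L] [LieAlgebra K L]
    -- (g, δ) is a Lie bialgebra
    (δ : L →ₗ[K] L ⊗[K] L)
    (hskew : skewCobracket K L δ) (hcoc : cocycle K L δ) (hcoj : coJacobi K L δ)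
    -- t ∈ ∧²g, written t = Σᵢ aᵢ ∧ bᵢ = Σᵢ (aᵢ ⊗ bᵢ − bᵢ ⊗ aᵢ)
    (ι : Type*) [Fintype ι] (a b : ι → L) (t : L ⊗[K] L)
    (ht : t = ∑ i, (a i ⊗ₜ[K] b i - b i ⊗ₜ[K] a i))
    -- the twist condition δ(t) + (1/2)[t,t] = 0, written in g ⊗ g ⊗ g via the
    -- antisymmetrization embedding of ∧³g (so that [t,t]/2 is the CYB expression of t)
    (htw : Alt3 K L (Dmap K L δ t)
      + (2 : K) • cyb K L (Sum.elim a fun i => -(b i)) (Sum.elim b a) = 0) :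
    -- δ_t = δ + [t, ·] = δ − ad_•(t) is again a Lie bialgebra structure:
    skewCobracket K L (δ - adT K L t) ∧ cocycle K L (δ - adT K L t)
      ∧ coJacobi K L (δ - adT K L t) := by
  have hskew_t : TensorProduct.comm K L L t = -t := ht ▸ comm_sum_sub_tmul a b
  exact ⟨hskew.sub (skewCobracket_adT hskew_t), hcoc.sub (cocycle_adT t),
    coJacobi_sub_adT a b hskew hcoc hcoj ht (cycSum_Dmap_eq_neg_cyb a b hskew ht htw)⟩

theorem stmt2 {K : Type*} [Field K] [CharZero K]
    {L : Type*} [LieRing L] [LieAlgebra K L] [Module.Finite K L]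
    -- (g, δ) is a Lie bialgebra
    (δ : L →ₗ[K] L ⊗[K] L)
    (hskew : skewCobracket K L δ) (hcoc : cocycle K L δ) (hcoj : coJacobi K L δ)
    -- t ∈ ∧²g, written t = Σᵢ aᵢ ∧ bᵢ = Σᵢ (aᵢ ⊗ bᵢ − bᵢ ⊗ aᵢ)
    (ι : Type*) [Fintype ι] (a b : ι → L) (t : L ⊗[K] L)
    (ht : t = ∑ i, (a i ⊗ₜ[K] b i - b i ⊗ₜ[K] a i))
    -- the twist condition δ(t) + (1/2)[t,t] = 0, written in g ⊗ g ⊗ g via the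
    -- antisymmetrization embedding of ∧³g (so that [t,t]/2 is the CYB expression of t)
    (htw : Alt3 K L (Dmap K L δ t)
      + (2 : K) • cyb K L (Sum.elim a fun i => -(b i)) (Sum.elim b a) = 0) :
    -- δ_t = δ + [t, ·] = δ − ad_•(t) is again a Lie bialgebra structure:
    skewCobracket K L (δ - adT K L t) ∧ cocycle K L (δ - adT K L t)
      ∧ coJacobi K L (δ - adT K L t) :=
  stmt2_general δ hskew hcoc hcoj ι a b t ht htw
end

section
/- Let (g, r) be a quasitriangular Lie bialgebra, m ≥ 1, and r^(m) = (r,…,r) − Mixᵐ(r) ∈ gᵐ ⊗ gᵐ. Then the diagonal embedding diag_m : g → gᵐ, x ↦ (x,…,x), is a morphism of Lie bialgebras from (g, δ_r) to (gᵐ, δ_{r^(m)}), i.e. δ_{r^(m)}(diag_m(x)) = (diag_m ⊗ diag_m)(δ_r(x)) for all x ∈ g. -/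
/-
Bracketing with `diagm z` acts on the `(k, l)` block of `gᵐ ⊗ gᵐ` as bracketing with `z` on
`g ⊗ g`. Ad-invariance of `r + r₂₁` gives `⁅z, r₂₁⁆ = -⁅z, r⁆`, so the bracket of `diagm z`
with `Mixᵐ(r)` is minus the sum of the off-diagonal blocks `(k, l)` and `(l, k)`, `k < l`, of
`⁅z, r⁆`. Together with the diagonal blocks coming from `(r, …, r)` these make up all `m²`
blocks of `⁅z, r⁆`, which is `(diagm ⊗ diagm) ⁅z, r⁆`.
-/

open TensorProduct DirectSum

section defs

variable (K : Type*) [Field K] [CharZero K]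
variable (L : Type*) [LieRing L] [LieAlgebra K L]

/-- `gᵐ`, the direct product of `m` copies of `L`. -/
abbrev Lm (m : ℕ) : Type _ := ⨁ _ : Fin m, L

/-- the embedding of `L` into `gᵐ` as the `j`-th component. -/
noncomputable def sing (m : ℕ) (j : Fin m) : L →ₗ[K] Lm L m :=
  DirectSum.lof K (Fin m) (fun _ => L) j

/-- the diagonal embedding `g → gᵐ`. -/
noncomputable def diagm (m : ℕ) : L →ₗ[K] Lm L m := ∑ j : Fin m, sing K L m j

end defs

lemma sum_sum_eq_sum_diag_add_sum_lt {ι M : Type*} [Fintype ι] [LinearOrder ι]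
    [AddCommMonoid M] (F : ι → ι → M) :
    ∑ k, ∑ l, F k l = ∑ j, F j j + ∑ k, ∑ l, if k < l then F k l + F l k else 0 := by
  have trichotomy : ∀ k l, F k l = ((if k < l then F k l else 0) + if k = l then F k l else 0)
      + if l < k then F k l else 0 := by
    intro k l
    rcases lt_trichotomy k l with h | rfl | h
    · simp [h, h.ne, h.not_gt]
    · simp
    · simp [h, h.ne', h.not_gt]
  have diag : ∑ k, ∑ l, (if k = l then F k l else 0) = ∑ j, F j j := by
    simp
  have below : ∑ k, ∑ l, (if l < k then F k l else 0)
      = ∑ k, ∑ l, if k < l then F l k else 0 :=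
    Finset.sum_comm
  conv_lhs => enter [2, k, 2, l]; rw [trichotomy k l]
  simp only [Finset.sum_add_distrib, diag, below, ite_add_zero]
  abel

section diagonal

variable {K : Type*} [Field K] {L : Type*} [LieRing L] [LieAlgebra K L] {m : ℕ}

lemma lie_diagm_sing (z a : L) (k : Fin m) :
    ⁅diagm K L m z, sing K L m k a⁆ = sing K L m k ⁅z, a⁆ := by
  rw [diagm, LinearMap.sum_apply, sum_lie, Finset.sum_eq_single k]
  · exact DirectSum.lie_of_same (fun _ : Fin m => L) z a
  · intro j _ hj
    exact DirectSum.lie_of_of_ne (fun _ : Fin m => L) hj z a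
  · simp

lemma lie_diagm_map_sing (z : L) (k l : Fin m) (t : L ⊗[K] L) :
    ⁅diagm K L m z, map (sing K L m k) (sing K L m l) t⁆
      = map (sing K L m k) (sing K L m l) ⁅z, t⁆ := by
  induction t using TensorProduct.induction_on with
  | zero => simp
  | tmul a b => simp [LieModule.lie_tmul_right, lie_diagm_sing]
  | add u v hu hv => simp [lie_add, hu, hv]

lemma map_diagm_eq_sum_map_sing (t : L ⊗[K] L) :
    map (diagm K L m) (diagm K L m) t
      = ∑ k : Fin m, ∑ l : Fin m, map (sing K L m k) (sing K L m l) t := by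
  induction t using TensorProduct.induction_on with
  | zero => simp
  | tmul a b =>
      simp only [diagm, map_tmul, LinearMap.sum_apply, sum_tmul, tmul_sum]
      exact Finset.sum_comm
  | add u v hu hv => simp only [map_add, hu, hv, ← Finset.sum_add_distrib]

end diagonal

theorem stmt4_general {K : Type*} [Field K] [CharZero K]
    {L : Type*} [LieRing L] [LieAlgebra K L]
    (m : ℕ)
    (ι : Type*) [Fintype ι] (x y : ι → L) (r : L ⊗[K] L)
    -- r = Σᵢ xᵢ ⊗ yᵢ is a quasitriangular r-matrix:
    (hr : r = ∑ i, x i ⊗ₜ[K] y i)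
    (hΩ : ∀ z : L, ⁅z, (2 : K)⁻¹ • (r + TensorProduct.comm K L L r)⁆ = 0)
    -- Mixᵐ(r) = Σ_{k<l} Σᵢ ((yᵢ)_k ⊗ (xᵢ)_l − (xᵢ)_l ⊗ (yᵢ)_k)
    (Mix : Lm L m ⊗[K] Lm L m)
    (hMix : Mix = ∑ k : Fin m, ∑ l : Fin m, ∑ i,
        if k < l then (sing K L m k (y i) ⊗ₜ[K] sing K L m l (x i)
          - sing K L m l (x i) ⊗ₜ[K] sing K L m k (y i)) else 0)
    -- r^(m) = (r, …, r) − Mixᵐ(r)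
    (rM : Lm L m ⊗[K] Lm L m)
    (hrM : rM = (∑ j : Fin m,
        TensorProduct.map (sing K L m j) (sing K L m j) r) - Mix) :
    -- diag_m is a morphism of Lie bialgebras from (g, δ_r) to (gᵐ, δ_{r^(m)})
    ∀ z : L, ⁅diagm K L m z, rM⁆
      = TensorProduct.map (diagm K L m) (diagm K L m) ⁅z, r⁆ := by
  intro z
  set block := fun (k l : Fin m) => map (sing K L m k) (sing K L m l)
  have lie_comm_r : ⁅z, TensorProduct.comm K L L r⁆ = -⁅z, r⁆ := by
    have h := hΩ z
    rw [lie_smul, smul_eq_zero, lie_add] at h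
    exact eq_neg_of_add_eq_zero_right (h.resolve_left (by norm_num))
  have Mix_eq : Mix = ∑ k, ∑ l,
      if k < l then block k l (TensorProduct.comm K L L r) - block l k r else 0 := by
    rw [hMix]
    refine Finset.sum_congr rfl fun k _ => Finset.sum_congr rfl fun l _ => ?_
    split_ifs
    · simp [block, hr, map_sum, Finset.sum_sub_distrib]
    · simp
  have lie_Mix : ⁅diagm K L m z, Mix⁆
      = -∑ k, ∑ l, if k < l then block k l ⁅z, r⁆ + block l k ⁅z, r⁆ else 0 := by
    simp only [Mix_eq, lie_sum, ← Finset.sum_neg_distrib]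
    refine Finset.sum_congr rfl fun k _ => Finset.sum_congr rfl fun l _ => ?_
    split_ifs
    · rw [lie_sub, lie_diagm_map_sing, lie_diagm_map_sing, lie_comm_r, map_neg]
      abel
    · simp
  rw [hrM, lie_sub, lie_sum, lie_Mix, map_diagm_eq_sum_map_sing,
    sum_sum_eq_sum_diag_add_sum_lt fun k l => block k l ⁅z, r⁆, sub_neg_eq_add]
  simp only [lie_diagm_map_sing, block]

theorem stmt4 {K : Type*} [Field K] [CharZero K]
    {L : Type*} [LieRing L] [LieAlgebra K L] [Module.Finite K L]
    (m : ℕ) (hm : 1 ≤ m)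
    (ι : Type*) [Fintype ι] (x y : ι → L) (r : L ⊗[K] L)
    -- r = Σᵢ xᵢ ⊗ yᵢ is a quasitriangular r-matrix:
    (hr : r = ∑ i, x i ⊗ₜ[K] y i)
    (hΩ : ∀ z : L, ⁅z, (2 : K)⁻¹ • (r + TensorProduct.comm K L L r)⁆ = 0)
    (hCYBE : ∑ i, ∑ j,
        (⁅x i, x j⁆ ⊗ₜ[K] (y i ⊗ₜ[K] y j) + x i ⊗ₜ[K] (⁅y i, x j⁆ ⊗ₜ[K] y j)
          + x i ⊗ₜ[K] (x j ⊗ₜ[K] ⁅y i, y j⁆)) = (0 : L ⊗[K] (L ⊗[K] L)))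
    -- Mixᵐ(r) = Σ_{k<l} Σᵢ ((yᵢ)_k ⊗ (xᵢ)_l − (xᵢ)_l ⊗ (yᵢ)_k)
    (Mix : Lm L m ⊗[K] Lm L m)
    (hMix : Mix = ∑ k : Fin m, ∑ l : Fin m, ∑ i,
        if k < l then (sing K L m k (y i) ⊗ₜ[K] sing K L m l (x i)
          - sing K L m l (x i) ⊗ₜ[K] sing K L m k (y i)) else 0)
    -- r^(m) = (r, …, r) − Mixᵐ(r)
    (rM : Lm L m ⊗[K] Lm L m)
    (hrM : rM = (∑ j : Fin m,
        TensorProduct.map (sing K L m j) (sing K L m j) r) - Mix) :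
    -- diag_m is a morphism of Lie bialgebras from (g, δ_r) to (gᵐ, δ_{r^(m)})
    ∀ z : L, ⁅diagm K L m z, rM⁆
      = TensorProduct.map (diagm K L m) (diagm K L m) ⁅z, r⁆ :=
  stmt4_general m ι x y r hr hΩ Mix hMix rM hrM
end

section
/- Let (g, δ) be a Lie bialgebra and u ⊂ g a strongly coisotropic Lie subalgebra, i.e. δ(u) ⊂ g ⊗ [u,u] + [u,u] ⊗ g. Let ρ : g → Der(A) be a Poisson action of (g, δ) on a Poisson algebra (A, {·,·}). Then for any Lie algebra characters ζ₁, ζ₂ of u (linear maps u → K vanishing on [u,u]), the Poisson bracket of weight spaces satisfies {A^{ζ₁}, A^{ζ₂}} ⊂ A^{ζ₁+ζ₂}, where A^ζ = {f ∈ A : ρ(x)(f) = ζ(x)f for all x ∈ u}. In particular the span of semi-invariants A^u = ⊕_ζ A^ζ is a graded Poisson subalgebra of A. -/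
/- STATEMENT 6: If u is a strongly coisotropic Lie subalgebra of a Lie bialgebra (g, δ)
(δ(u) ⊂ g ⊗ [u,u] + [u,u] ⊗ g) and ρ : g → Der(A) is a Poisson action on a Poisson
algebra (A, {·,·}), then for Lie algebra characters ζ₁, ζ₂ of u one has
{A^{ζ₁}, A^{ζ₂}} ⊂ A^{ζ₁+ζ₂}: the semi-invariants form a graded Poisson subalgebra. -/

open TensorProduct

section defs

variable (K : Type*) [Field K] [CharZero K]
variable (L : Type*) [LieRing L] [LieAlgebra K L]

/-- the image of `p ⊗ q` in `L ⊗ L`, for submodules `p q ⊆ L`. -/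
noncomputable def tpSub (p q : Submodule K L) : Submodule K (L ⊗[K] L) :=
  Submodule.map₂ (TensorProduct.mk K L L) p q

/-- the derived subalgebra `[u,u]` of a Lie subalgebra `u`, as a submodule of `L`. -/
def derived (u : LieSubalgebra K L) : Submodule K L :=
  Submodule.span K {z : L | ∃ a ∈ u, ∃ b ∈ u, z = ⁅a, b⁆}

variable (A : Type*) [CommRing A] [Algebra K A]

/-- the bilinear operator on `A` induced by an element of `g ⊗ g` and an action
`ρ : g → End(A)`:  `biop ρ (x ⊗ y) f g = ρ(x)(f) · ρ(y)(g)`. -/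
noncomputable def biop (ρ : L →ₗ[K] Module.End K A) :
    L ⊗[K] L →ₗ[K] A →ₗ[K] A →ₗ[K] A :=
  TensorProduct.lift
  { toFun := fun u =>
      { toFun := fun v => (LinearMap.mul K A).compl₁₂ (ρ u) (ρ v)
        map_add' := fun v w => by
          ext f g
          simp [LinearMap.compl₁₂_apply, map_add, mul_add]
        map_smul' := fun c v => by
          ext f g
          simp [LinearMap.compl₁₂_apply, mul_smul_comm] }
    map_add' := fun u u' => by
      ext v f g
      simp [LinearMap.compl₁₂_apply, map_add, add_mul]
    map_smul' := fun c u => by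
      ext v f g
      simp [LinearMap.compl₁₂_apply, smul_mul_assoc] }

end defs

/-
A weight vector of `u` is killed by `ρ([u,u])`, since `ρ⁅x, y⁆` acts on it by the commutator
of two scalars. Strong coisotropy puts `δ z`, for `z ∈ u`, in `g ⊗ [u,u] + [u,u] ⊗ g`, so the
term `ρ(δ z)` of the Poisson-action identity vanishes on a pair of weight vectors. Hence `ρ z`
acts on their bracket as a derivation of `{·,·}`, and the weights add.
-/

section

variable {K : Type*} [Field K] {L : Type*} [LieRing L] [LieAlgebra K L]

theorem map_derived_eq_zero_of_weight {M : Type*} [AddCommGroup M] [Module K M]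
    {ρ : L →ₗ[K] Module.End K M} (hρlie : ∀ z w : L, ρ ⁅z, w⁆ = ρ z * ρ w - ρ w * ρ z)
    {u : LieSubalgebra K L} {ζ : u →ₗ[K] K} {m : M} (hm : ∀ z : u, ρ z m = ζ z • m) :
    ∀ w ∈ derived K L u, ρ w m = 0 := by
  intro w hw
  induction hw using Submodule.span_induction with
  | mem x hx =>
    obtain ⟨p, hp, q, hq, rfl⟩ := hx
    rw [hρlie, LinearMap.sub_apply, Module.End.mul_apply, Module.End.mul_apply,
      hm ⟨p, hp⟩, hm ⟨q, hq⟩, map_smul, map_smul, hm ⟨p, hp⟩, hm ⟨q, hq⟩, smul_smul, smul_smul,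
      mul_comm, sub_self]
  | zero => simp
  | add x y _ _ hx hy => rw [map_add, LinearMap.add_apply, hx, hy, add_zero]
  | smul c x _ hx => rw [map_smul, LinearMap.smul_apply, hx, smul_zero]

variable {A : Type*} [CommRing A] [Algebra K A]

theorem biop_tmul (ρ : L →ₗ[K] Module.End K A) (x y : L) (a b : A) :
    biop K L A ρ (x ⊗ₜ y) a b = ρ x a * ρ y b :=
  rfl

theorem biop_eq_zero_of_mem_sup {ρ : L →ₗ[K] Module.End K A} {p : Submodule K L}
    {t : L ⊗[K] L} (ht : t ∈ tpSub K L ⊤ p ⊔ tpSub K L p ⊤) {a b : A}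
    (ha : ∀ w ∈ p, ρ w a = 0) (hb : ∀ w ∈ p, ρ w b = 0) :
    biop K L A ρ t a b = 0 := by
  let φ : L ⊗[K] L →ₗ[K] A :=
    LinearMap.applyₗ b ∘ₗ LinearMap.applyₗ a ∘ₗ biop K L A ρ
  have hker : tpSub K L ⊤ p ⊔ tpSub K L p ⊤ ≤ LinearMap.ker φ :=
    sup_le
      (Submodule.map₂_le.2 fun x _ y hy => by simp [φ, biop_tmul, hb y hy])
      (Submodule.map₂_le.2 fun x hx y _ => by simp [φ, biop_tmul, ha x hx])
  exact hker ht

end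

theorem stmt6_general {K : Type*} [Field K]
    {L : Type*} [LieRing L] [LieAlgebra K L]
    {A : Type*} [CommRing A] [Algebra K A]
    -- a Lie bialgebra cobracket δ on g
    (δ : L →ₗ[K] L ⊗[K] L)
    -- u ⊆ g is a strongly coisotropic Lie subalgebra:
    -- δ(u) ⊆ g ⊗ [u,u] + [u,u] ⊗ g
    (u : LieSubalgebra K L)
    (hu : ∀ z ∈ u, δ z ∈
      tpSub K L ⊤ (derived K L u) ⊔ tpSub K L (derived K L u) ⊤)
    -- (A, P) is a Poisson algebra
    (P : A →ₗ[K] A →ₗ[K] A)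
    -- ρ : g → Der(A) is a Poisson action of (g, δ) on (A, P)
    (ρ : L →ₗ[K] Module.End K A)
    (hρlie : ∀ z w : L, ρ ⁅z, w⁆ = ρ z * ρ w - ρ w * ρ z)
    (hρpa : ∀ (z : L) (f g : A),
      biop K L A ρ (δ z) f g - biop K L A ρ (δ z) g f
        = ρ z (P f g) - P (ρ z f) g - P f (ρ z g))
    -- ζ₁, ζ₂ are Lie algebra characters of u (vanishing on [u,u])
    (ζ₁ ζ₂ : u →ₗ[K] K)
    -- f is a weight vector of weight ζ₁ and g one of weight ζ₂
    (f g : A)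
    (hf : ∀ z : u, ρ z f = ζ₁ z • f)
    (hg : ∀ z : u, ρ z g = ζ₂ z • g) :
    -- then {f,g} is a weight vector of weight ζ₁ + ζ₂
    ∀ z : u, ρ z (P f g) = (ζ₁ z + ζ₂ z) • P f g := by
  intro z
  have hfu := map_derived_eq_zero_of_weight hρlie hf
  have hgu := map_derived_eq_zero_of_weight hρlie hg
  have hder : ρ z (P f g) = P (ρ z f) g + P f (ρ z g) := by
    have h := hρpa z f g
    rw [biop_eq_zero_of_mem_sup (hu z z.2) hfu hgu, biop_eq_zero_of_mem_sup (hu z z.2) hgu hfu,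
      sub_zero] at h
    linear_combination -h
  rw [hder, hf z, hg z, map_smul, LinearMap.smul_apply, map_smul, add_smul]

theorem stmt6 {K : Type*} [Field K] [CharZero K]
    {L : Type*} [LieRing L] [LieAlgebra K L] [Module.Finite K L]
    {A : Type*} [CommRing A] [Algebra K A]
    -- a Lie bialgebra cobracket δ on g
    (δ : L →ₗ[K] L ⊗[K] L)
    (hskew : ∀ z : L, TensorProduct.comm K L L (δ z) = - δ z)
    (hcoc : ∀ z w : L, δ ⁅z, w⁆ = ⁅z, δ w⁆ - ⁅w, δ z⁆)
    -- u ⊆ g is a strongly coisotropic Lie subalgebra: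
    -- δ(u) ⊆ g ⊗ [u,u] + [u,u] ⊗ g
    (u : LieSubalgebra K L)
    (hu : ∀ z ∈ u, δ z ∈
      tpSub K L ⊤ (derived K L u) ⊔ tpSub K L (derived K L u) ⊤)
    -- (A, P) is a Poisson algebra
    (P : A →ₗ[K] A →ₗ[K] A)
    (hPanti : ∀ f g : A, P f g = - P g f)
    (hPleib : ∀ f g h : A, P f (g * h) = g * P f h + P f g * h)
    (hPjac : ∀ f g h : A, P f (P g h) = P (P f g) h + P g (P f h))
    -- ρ : g → Der(A) is a Poisson action of (g, δ) on (A, P)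
    (ρ : L →ₗ[K] Module.End K A)
    (hρder : ∀ (z : L) (f g : A), ρ z (f * g) = f * ρ z g + ρ z f * g)
    (hρlie : ∀ z w : L, ρ ⁅z, w⁆ = ρ z * ρ w - ρ w * ρ z)
    (hρpa : ∀ (z : L) (f g : A),
      biop K L A ρ (δ z) f g - biop K L A ρ (δ z) g f
        = ρ z (P f g) - P (ρ z f) g - P f (ρ z g))
    -- ζ₁, ζ₂ are Lie algebra characters of u (vanishing on [u,u])
    (ζ₁ ζ₂ : u →ₗ[K] K)
    (hζ₁ : ∀ a b : u, ζ₁ ⁅a, b⁆ = 0) (hζ₂ : ∀ a b : u, ζ₂ ⁅a, b⁆ = 0)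
    -- f is a weight vector of weight ζ₁ and g one of weight ζ₂
    (f g : A)
    (hf : ∀ z : u, ρ z f = ζ₁ z • f)
    (hg : ∀ z : u, ρ z g = ζ₂ z • g) :
    -- then {f,g} is a weight vector of weight ζ₁ + ζ₂
    ∀ z : u, ρ z (P f g) = (ζ₁ z + ζ₂ z) • P f g :=
  stmt6_general δ u hu P ρ hρlie hρpa ζ₁ ζ₂ f g hf hg
end

section
/- Let r ∈ g ⊗ g be a quasitriangular r-matrix on a Lie algebra g and u ⊂ g a Lie subalgebra such that r ∈ u ⊗ u + g ⊗ [u,u] + [u,u] ⊗ g. Then u is a strongly coisotropic subalgebra of the Lie bialgebra (g, δ_r), i.e. δ_r(u) ⊂ g ⊗ [u,u] + [u,u] ⊗ g. -/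
/-!
`δ_r(z) = ⁅z, r⁆` for the adjoint action of `L` on `L ⊗ L`, which acts on `p ⊗ q` by the
Leibniz rule. For `z ∈ u` this action maps `u` into `[u,u]` and preserves both `L` and `[u,u]`
(an ideal of `u`), so it maps each of the three summands `u ⊗ u`, `L ⊗ [u,u]`, `[u,u] ⊗ L`
into `L ⊗ [u,u] + [u,u] ⊗ L`. -/

open TensorProduct

section

variable {K : Type*} [Field K] {L : Type*} [LieRing L] [LieAlgebra K L]

theorem lie_mem_tpSub_sup {p q p' q' : Submodule K L} {z : L}
    (hp : ∀ a ∈ p, ⁅z, a⁆ ∈ p') (hq : ∀ b ∈ q, ⁅z, b⁆ ∈ q') {t : L ⊗[K] L}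
    (ht : t ∈ tpSub K L p q) : ⁅z, t⁆ ∈ tpSub K L p' q ⊔ tpSub K L p q' := by
  suffices tpSub K L p q ≤ (tpSub K L p' q ⊔ tpSub K L p q').comap (LieModule.toEnd K L _ z) from
    this ht
  refine Submodule.map₂_le.mpr fun a ha b hb => ?_
  rw [Submodule.mem_comap, LieModule.toEnd_apply_apply, TensorProduct.mk_apply,
    TensorProduct.LieModule.lie_tmul_right]
  exact Submodule.add_mem_sup (Submodule.apply_mem_map₂ _ (hp a ha) hb)
    (Submodule.apply_mem_map₂ _ ha (hq b hb))

theorem lie_mem_derived {u : LieSubalgebra K L} {a b : L} (ha : a ∈ u) (hb : b ∈ u) :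
    ⁅a, b⁆ ∈ derived K L u :=
  Submodule.subset_span ⟨a, ha, b, hb, rfl⟩

theorem lie_mem_derived_of_mem_derived {u : LieSubalgebra K L} {z w : L} (hz : z ∈ u)
    (hw : w ∈ derived K L u) : ⁅z, w⁆ ∈ derived K L u := by
  induction hw using Submodule.span_induction with
  | mem w hw =>
    obtain ⟨a, ha, b, hb, rfl⟩ := hw
    rw [leibniz_lie]
    exact add_mem (lie_mem_derived (u.lie_mem hz ha) hb) (lie_mem_derived ha (u.lie_mem hz hb))
  | zero => simp
  | add w₁ w₂ _ _ h₁ h₂ => rw [lie_add]; exact add_mem h₁ h₂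
  | smul c w _ h => rw [lie_smul]; exact Submodule.smul_mem _ c h

end

theorem stmt7_general {K : Type*} [Field K]
    {L : Type*} [LieRing L] [LieAlgebra K L]
    (r : L ⊗[K] L)
    -- u ⊆ g is a Lie subalgebra with r ∈ u ⊗ u + g ⊗ [u,u] + [u,u] ⊗ g
    (u : LieSubalgebra K L)
    (hru : r ∈ tpSub K L u.toSubmodule u.toSubmodule
      ⊔ tpSub K L ⊤ (derived K L u) ⊔ tpSub K L (derived K L u) ⊤) :
    -- then u is strongly coisotropic: δ_r(u) ⊆ g ⊗ [u,u] + [u,u] ⊗ g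
    ∀ z ∈ u, ⁅z, r⁆ ∈ tpSub K L ⊤ (derived K L u) ⊔ tpSub K L (derived K L u) ⊤ := by
  intro z hz
  set D := derived K L u
  have hu : ∀ a ∈ u.toSubmodule, ⁅z, a⁆ ∈ D := fun a ha => lie_mem_derived hz ha
  have hD : ∀ a ∈ D, ⁅z, a⁆ ∈ D := fun a ha => lie_mem_derived_of_mem_derived hz ha
  have htop : ∀ a ∈ (⊤ : Submodule K L), ⁅z, a⁆ ∈ (⊤ : Submodule K L) := fun _ _ => trivial
  obtain ⟨t, ht, s₃, hs₃, rfl⟩ := Submodule.mem_sup.mp hru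
  obtain ⟨s₁, hs₁, s₂, hs₂, rfl⟩ := Submodule.mem_sup.mp ht
  rw [lie_add, lie_add]
  refine add_mem (add_mem ?_ ?_) ?_
  · refine sup_le (α := Submodule K (L ⊗[K] L)) ?_ ?_ (lie_mem_tpSub_sup hu hu hs₁)
    · exact le_sup_right.trans' (Submodule.map₂_le_map₂_right le_top)
    · exact le_sup_left.trans' (Submodule.map₂_le_map₂_left le_top)
  · exact Submodule.mem_sup_left (by simpa only [sup_idem] using lie_mem_tpSub_sup htop hD hs₂)
  · exact Submodule.mem_sup_right (by simpa only [sup_idem] using lie_mem_tpSub_sup hD htop hs₃)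

theorem stmt7 {K : Type*} [Field K] [CharZero K]
    {L : Type*} [LieRing L] [LieAlgebra K L] [Module.Finite K L]
    (ι : Type*) [Fintype ι] (x y : ι → L) (r : L ⊗[K] L)
    -- r = Σᵢ xᵢ ⊗ yᵢ is a quasitriangular r-matrix:
    (hr : r = ∑ i, x i ⊗ₜ[K] y i)
    (hΩ : ∀ z : L, ⁅z, (2 : K)⁻¹ • (r + TensorProduct.comm K L L r)⁆ = 0)
    (hCYBE : ∑ i, ∑ j,
        (⁅x i, x j⁆ ⊗ₜ[K] (y i ⊗ₜ[K] y j) + x i ⊗ₜ[K] (⁅y i, x j⁆ ⊗ₜ[K] y j)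
          + x i ⊗ₜ[K] (x j ⊗ₜ[K] ⁅y i, y j⁆)) = (0 : L ⊗[K] (L ⊗[K] L)))
    -- u ⊆ g is a Lie subalgebra with r ∈ u ⊗ u + g ⊗ [u,u] + [u,u] ⊗ g
    (u : LieSubalgebra K L)
    (hru : r ∈ tpSub K L u.toSubmodule u.toSubmodule
      ⊔ tpSub K L ⊤ (derived K L u) ⊔ tpSub K L (derived K L u) ⊤) :
    -- then u is strongly coisotropic: δ_r(u) ⊆ g ⊗ [u,u] + [u,u] ⊗ g
    ∀ z ∈ u, ⁅z, r⁆ ∈ tpSub K L ⊤ (derived K L u) ⊔ tpSub K L (derived K L u) ⊤ :=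
  stmt7_general r u hru
end

section
/- Let (H, R) be a quasitriangular Hopf algebra. Then the comultiplication Δ_H : H → (H ⊗ H)_{R₂₃} is a morphism of Hopf algebras, where (H ⊗ H)_{R₂₃} is the twist of H ⊗ H by the twisting element R₂₃; concretely, Δ_H is an algebra map and (R₂₃)⁻¹ · Δ_{H⊗H}(Δ_H(h)) · R₂₃ = (Δ_H ⊗ Δ_H)(Δ_H(h)) in (H⊗H)⊗(H⊗H) for all h ∈ H, after identifying via the flip of middle factors. -/
open TensorProduct

universe u

/-- A quasitriangular structure on a Hopf algebra `H`: an invertible element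
`R ∈ H ⊗ H` with `Δᵒᵖ = R Δ R⁻¹` and the hexagon identities
`(I ⊗ Δ)(R) = R₁₃R₁₂`, `(Δ ⊗ I)(R) = R₁₃R₂₃`. -/
structure QuasiTriangular (K H : Type u) [Field K] [Ring H] [HopfAlgebra K H] where
  R : H ⊗[K] H
  Rinv : H ⊗[K] H
  mul_inv : R * Rinv = 1
  inv_mul : Rinv * R = 1
  /-- `Δᵒᵖ(h) R = R Δ(h)`, i.e. `Δᵒᵖ = R Δ R⁻¹`. -/
  compat : ∀ h : H,
    (TensorProduct.comm K H H) (Coalgebra.comul (R := K) h) * R = R * Coalgebra.comul (R := K) h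
  /-- `(I ⊗ Δ)(R) = R₁₃ R₁₂` in `H ⊗ (H ⊗ H)`. -/
  hex1 : LinearMap.lTensor H (Coalgebra.comul (R := K) (A := H)) R
    = Algebra.TensorProduct.map (AlgHom.id K H) Algebra.TensorProduct.includeRight R
      * Algebra.TensorProduct.map (AlgHom.id K H) Algebra.TensorProduct.includeLeft R
  /-- `(Δ ⊗ I)(R) = R₁₃ R₂₃` in `H ⊗ (H ⊗ H)`. -/
  hex2 : Algebra.TensorProduct.assoc K K K H H H
      (LinearMap.rTensor H (Coalgebra.comul (R := K) (A := H)) R)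
    = Algebra.TensorProduct.map (AlgHom.id K H) Algebra.TensorProduct.includeRight R
      * (Algebra.TensorProduct.includeRight : (H ⊗[K] H) →ₐ[K] H ⊗[K] (H ⊗[K] H)) R

/-! Regroup `(H ⊗ H) ⊗ (H ⊗ H)` as `(H ⊗ (H ⊗ H)) ⊗ H`, an algebra isomorphism.
By coassociativity `(Δ ⊗ Δ)(Δ h)` becomes `h₁ ⊗ Δ(h₂) ⊗ h₃`, and `Δ_{H⊗H}(Δ h)`, which
differs from it by the flip of the middle factors, becomes `h₁ ⊗ Δᵒᵖ(h₂) ⊗ h₃`, while `R₂₃`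
becomes `1 ⊗ R ⊗ 1`. So `Δ_{H⊗H}(Δ h) R₂₃ = R₂₃ (Δ ⊗ Δ)(Δ h)` is `Δᵒᵖ(x) R = R Δ(x)`
applied in the middle factor. -/

namespace Algebra.TensorProduct

variable (R A B C D : Type*) [CommSemiring R] [Semiring A] [Semiring B] [Semiring C] [Semiring D]
  [Algebra R A] [Algebra R B] [Algebra R C] [Algebra R D]

noncomputable def tensorTensorTensorAssoc :
    (A ⊗[R] B) ⊗[R] (C ⊗[R] D) ≃ₐ[R] (A ⊗[R] (B ⊗[R] C)) ⊗[R] D :=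
  (Algebra.TensorProduct.assoc R R R (A ⊗[R] B) C D).symm.trans
    (congr (Algebra.TensorProduct.assoc R R R A B C) AlgEquiv.refl)

variable {R A B C D}

theorem tensorTensorTensorAssoc_apply (x : (A ⊗[R] B) ⊗[R] (C ⊗[R] D)) :
    tensorTensorTensorAssoc R A B C D x
      = _root_.TensorProduct.tensorTensorTensorAssoc R A B C D x :=
  rfl

theorem tensorTensorTensorAssoc_map_includeRight_includeLeft (x : B ⊗[R] C) :
    tensorTensorTensorAssoc R A B C D
      (map (includeRight : B →ₐ[R] A ⊗[R] B) (includeLeft : C →ₐ[R] C ⊗[R] D) x)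
      = (1 ⊗ₜ x) ⊗ₜ 1 := by
  show ((tensorTensorTensorAssoc R A B C D).toAlgHom.comp (map includeRight includeLeft)) x
    = (includeLeft.comp includeRight : B ⊗[R] C →ₐ[R] _) x
  congr 1
  ext <;> rfl

end Algebra.TensorProduct

theorem TensorProduct.tensorTensorTensorAssoc_tensorTensorTensorComm
    {R M N P Q : Type*} [CommSemiring R] [AddCommMonoid M] [AddCommMonoid N] [AddCommMonoid P]
    [AddCommMonoid Q] [Module R M] [Module R N] [Module R P] [Module R Q]
    (x : (M ⊗[R] P) ⊗[R] (N ⊗[R] Q)) :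
    tensorTensorTensorAssoc R M N P Q (tensorTensorTensorComm R M P N Q x)
      = (LinearMap.lTensor M (TensorProduct.comm R P N).toLinearMap).rTensor Q
          (tensorTensorTensorAssoc R M P N Q x) := by
  have : (tensorTensorTensorAssoc R M N P Q).toLinearMap
        ∘ₗ (tensorTensorTensorComm R M P N Q).toLinearMap
      = (LinearMap.lTensor M (TensorProduct.comm R P N).toLinearMap).rTensor Q
          ∘ₗ (tensorTensorTensorAssoc R M P N Q).toLinearMap :=
    ext_fourfold' fun _ _ _ _ => rfl
  exact LinearMap.congr_fun this x

theorem TensorProduct.tensorTensorTensorAssoc_rTensor_assoc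
    {R M N P Q S : Type*} [CommSemiring R] [AddCommMonoid M] [AddCommMonoid N] [AddCommMonoid P]
    [AddCommMonoid Q] [AddCommMonoid S] [Module R M] [Module R N] [Module R P] [Module R Q]
    [Module R S] (f : M →ₗ[R] N ⊗[R] P) (x : (M ⊗[R] Q) ⊗[R] S) :
    tensorTensorTensorAssoc R N P Q S (f.rTensor (Q ⊗[R] S) (TensorProduct.assoc R M Q S x))
      = ((TensorProduct.assoc R N P Q).toLinearMap ∘ₗ f.rTensor Q).rTensor S x := by
  have : (tensorTensorTensorAssoc R N P Q S).toLinearMap ∘ₗ f.rTensor (Q ⊗[R] S)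
        ∘ₗ (TensorProduct.assoc R M Q S).toLinearMap
      = ((TensorProduct.assoc R N P Q).toLinearMap ∘ₗ f.rTensor Q).rTensor S := by
    ext m q s
    suffices ∀ y : N ⊗[R] P, tensorTensorTensorAssoc R N P Q S (y ⊗ₜ (q ⊗ₜ s))
        = TensorProduct.assoc R N P Q (y ⊗ₜ q) ⊗ₜ s from this (f m)
    intro y
    induction y using TensorProduct.induction_on with
    | zero => simp
    | add y z hy hz => simp only [add_tmul, map_add, hy, hz]
    | tmul n p => rfl
  exact LinearMap.congr_fun this x

theorem Coalgebra.tensorTensorTensorAssoc_map_comul_comul {R C : Type*} [CommSemiring R]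
    [AddCommMonoid C] [Module R C] [Coalgebra R C] (c : C) :
    tensorTensorTensorAssoc R C C C C (map comul comul (comul c))
      = (comul.lTensor C).rTensor C (comul.rTensor C (comul (R := R) c)) := by
  calc tensorTensorTensorAssoc R C C C C (map comul comul (comul c))
      = tensorTensorTensorAssoc R C C C C (comul.rTensor (C ⊗[R] C)
          (_root_.TensorProduct.assoc R C C C (comul.rTensor C (comul (R := R) c)))) := by
        rw [coassoc_apply, ← LinearMap.rTensor_comp_lTensor, LinearMap.comp_apply]
    _ = ((_root_.TensorProduct.assoc R C C C).toLinearMap ∘ₗ comul.rTensor C).rTensor C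
          (comul.rTensor C (comul (R := R) c)) :=
        tensorTensorTensorAssoc_rTensor_assoc _ _
    _ = _ := by
        rw [← LinearMap.rTensor_comp_apply, ← LinearMap.rTensor_comp_apply,
          LinearMap.comp_assoc, coassoc]

theorem SemiconjBy.lTensor {R A B M : Type*} [CommSemiring R] [Semiring A] [Semiring B]
    [Algebra R A] [Algebra R B] [AddCommMonoid M] [Module R M] {f g : M →ₗ[R] A} {r : A}
    (h : ∀ m, SemiconjBy r (g m) (f m)) (x : B ⊗[R] M) :
    SemiconjBy (1 ⊗ₜ r) (g.lTensor B x) (f.lTensor B x) := by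
  induction x using TensorProduct.induction_on with
  | zero => simp only [map_zero]; exact SemiconjBy.zero_right _
  | add x y hx hy => simp only [map_add]; exact hx.add_right hy
  | tmul b m =>
    simp only [LinearMap.lTensor_tmul, SemiconjBy, Algebra.TensorProduct.tmul_mul_tmul, one_mul,
      mul_one, (h m).eq]

theorem SemiconjBy.rTensor {R A B M : Type*} [CommSemiring R] [Semiring A] [Semiring B]
    [Algebra R A] [Algebra R B] [AddCommMonoid M] [Module R M] {f g : M →ₗ[R] A} {r : A}
    (h : ∀ m, SemiconjBy r (g m) (f m)) (x : M ⊗[R] B) :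
    SemiconjBy (r ⊗ₜ 1) (g.rTensor B x) (f.rTensor B x) := by
  induction x using TensorProduct.induction_on with
  | zero => simp only [map_zero]; exact SemiconjBy.zero_right _
  | add x y hx hy => simp only [map_add]; exact hx.add_right hy
  | tmul m b =>
    simp only [LinearMap.rTensor_tmul, SemiconjBy, Algebra.TensorProduct.tmul_mul_tmul, one_mul,
      mul_one, (h m).eq]

theorem QuasiTriangular.semiconjBy_comul {K H : Type u} [Field K] [Ring H] [HopfAlgebra K H]
    (Q : QuasiTriangular K H) (h : H) :
    SemiconjBy Q.R (Coalgebra.comul (R := K) h)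
      (((TensorProduct.comm K H H).toLinearMap ∘ₗ Coalgebra.comul) h) :=
  (Q.compat h).symm

theorem QuasiTriangular.semiconjBy_map_comul_comul {K H : Type u} [Field K] [Ring H]
    [HopfAlgebra K H] (Q : QuasiTriangular K H) (h : H) :
    SemiconjBy
      (Algebra.TensorProduct.map (Algebra.TensorProduct.includeRight : H →ₐ[K] H ⊗[K] H)
        (Algebra.TensorProduct.includeLeft : H →ₐ[K] H ⊗[K] H) Q.R)
      (map Coalgebra.comul Coalgebra.comul (Coalgebra.comul (R := K) h))
      (Coalgebra.comul (R := K) (Coalgebra.comul (R := K) h)) := by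
  have hcomul : Coalgebra.comul (R := K) (Coalgebra.comul (R := K) h)
      = tensorTensorTensorComm K H H H H
          (map Coalgebra.comul Coalgebra.comul (Coalgebra.comul (R := K) h)) := rfl
  rw [← semiconjBy_map_iff (Algebra.TensorProduct.tensorTensorTensorAssoc K H H H H).injective,
    hcomul, Algebra.TensorProduct.tensorTensorTensorAssoc_map_includeRight_includeLeft,
    Algebra.TensorProduct.tensorTensorTensorAssoc_apply,
    Algebra.TensorProduct.tensorTensorTensorAssoc_apply,
    tensorTensorTensorAssoc_tensorTensorTensorComm,
    Coalgebra.tensorTensorTensorAssoc_map_comul_comul,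
    ← LinearMap.rTensor_comp_apply H (LinearMap.lTensor H (TensorProduct.comm K H H).toLinearMap),
    ← LinearMap.lTensor_comp]
  exact SemiconjBy.rTensor (SemiconjBy.lTensor Q.semiconjBy_comul) _

theorem stmt11 {K H : Type u} [Field K] [Ring H] [HopfAlgebra K H]
    (Q : QuasiTriangular K H)
    (J Ji : (H ⊗[K] H) ⊗[K] (H ⊗[K] H))
    (hJ : J = Algebra.TensorProduct.map
      (Algebra.TensorProduct.includeRight : H →ₐ[K] H ⊗[K] H)
      (Algebra.TensorProduct.includeLeft : H →ₐ[K] H ⊗[K] H) Q.R)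
    (hJi : Ji = Algebra.TensorProduct.map
      (Algebra.TensorProduct.includeRight : H →ₐ[K] H ⊗[K] H)
      (Algebra.TensorProduct.includeLeft : H →ₐ[K] H ⊗[K] H) Q.Rinv) :
    -- Δ is an algebra map into (H ⊗ H)_{R₂₃} (whose underlying algebra is H ⊗ H),
    (∀ a b : H, Coalgebra.comul (R := K) (a * b)
        = Coalgebra.comul (R := K) a * Coalgebra.comul (R := K) b)
    ∧ Coalgebra.comul (R := K) (1 : H) = 1
    -- and Δ intertwines Δ_H with the twisted comultiplication J⁻¹ Δ_{H⊗H} J: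
    ∧ ∀ h : H,
        Ji * Coalgebra.comul (R := K) (Coalgebra.comul (R := K) h) * J
          = TensorProduct.map (Coalgebra.comul (R := K)) (Coalgebra.comul (R := K))
              (Coalgebra.comul (R := K) h) := by
  refine ⟨Bialgebra.comul_mul, Bialgebra.comul_one, fun h => ?_⟩
  subst hJ hJi
  rw [mul_assoc, ← (Q.semiconjBy_map_comul_comul h).eq, ← mul_assoc, ← map_mul, Q.inv_mul,
    map_one, one_mul]
end

section
/- Let (H, R) be a quasitriangular Hopf algebra and U ⊂ H a Hopf subalgebra with R ∈ U ⊗ U + H ⊗ [U,U]. Then for every m ≥ 1, U^{⊗m} is a right strongly coisotropic subalgebra of the twisted m-fold tensor product Hopf algebra H_R^{(m)} = (H^{⊗m})_{Twiᵐ(R)}, i.e. Δ_{H_R^{(m)}}(U^{⊗m}) ⊂ U^{⊗m} ⊗ U^{⊗m} + H^{⊗m} ⊗ [U^{⊗m}, U^{⊗m}]. -/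
open TensorProduct

universe u

/-- A bundled bialgebra over `K`. -/
structure BB (K : Type u) [Field K] : Type (u + 1) where
  T : Type u
  [ring : Ring T]
  [bi : Bialgebra K T]

attribute [instance] BB.ring BB.bi

variable (K H : Type u) [Field K] [Ring H] [HopfAlgebra K H]

/-- the iterated tensor power `H^{⊗n}` (with a copy of `K` at the left end). -/
noncomputable def TPb : ℕ → BB K
  | 0 => ⟨K⟩
  | n+1 => ⟨(TPb n).T ⊗[K] H⟩

/-- the iterated comultiplication `Δ^{(n)} : H → H^{⊗n}`. -/
noncomputable def Dm : (n : ℕ) → H →ₗ[K] (TPb K H n).T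
  | 0 => Coalgebra.counit
  | n+1 => TensorProduct.map (Dm n) LinearMap.id ∘ₗ Coalgebra.comul (R := K)

/-- the inductively defined twisting element `Twiⁿ(R) ∈ H^{⊗n} ⊗ H^{⊗n}`:
`Twi⁰ = 1` and `Twi^{n+1}(R) = Twiⁿ(R)·(Δ^{(n)} ⊗ I ⊗ Δ^{(n)} ⊗ I)(R₂₃)`. -/
noncomputable def Twi (R : H ⊗[K] H) : (n : ℕ) → (TPb K H n).T ⊗[K] (TPb K H n).T
  | 0 => 1
  | n+1 =>
    (Algebra.TensorProduct.map
      (Algebra.TensorProduct.includeLeft : (TPb K H n).T →ₐ[K] (TPb K H n).T ⊗[K] H)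
      (Algebra.TensorProduct.includeLeft : (TPb K H n).T →ₐ[K] (TPb K H n).T ⊗[K] H))
      (Twi R n)
    * (TensorProduct.map (TensorProduct.map (Dm K H n) LinearMap.id)
        (TensorProduct.map (Dm K H n) LinearMap.id))
      (Algebra.TensorProduct.map
        (Algebra.TensorProduct.includeRight : H →ₐ[K] H ⊗[K] H)
        (Algebra.TensorProduct.includeLeft : H →ₐ[K] H ⊗[K] H) R)

/-- the embedding of `H` into `H^{⊗n}` in the (1-based) `j`-th tensor position. -/
noncomputable def pos : (n : ℕ) → ℕ → (H →ₗ[K] (TPb K H n).T)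
  | 0, _ => 0
  | n+1, j =>
    if j = n + 1 then
      (Algebra.TensorProduct.includeRight : H →ₐ[K] (TPb K H n).T ⊗[K] H).toLinearMap
    else
      (Algebra.TensorProduct.includeLeft : (TPb K H n).T →ₐ[K] (TPb K H n).T ⊗[K] H).toLinearMap
        ∘ₗ pos n j

section defs2

variable (K : Type u) [Field K]

/-- the image of `p ⊗ q` in `M ⊗ N`, for submodules `p ⊆ M`, `q ⊆ N`. -/
noncomputable def tpSubM {M N : Type u} [AddCommMonoid M] [Module K M]
    [AddCommMonoid N] [Module K N] (p : Submodule K M) (q : Submodule K N) :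
    Submodule K (M ⊗[K] N) :=
  Submodule.map₂ (TensorProduct.mk K M N) p q

/-- the two-sided ideal generated by the commutators of a (subalgebra given as a)
submodule `S`, spanned by the elements `a(bc − cb)d` with `a,b,c,d ∈ S`. -/
def commIdealS {A : Type u} [Ring A] [Algebra K A] (S : Submodule K A) : Submodule K A :=
  Submodule.span K
    {z : A | ∃ a ∈ S, ∃ b ∈ S, ∃ c ∈ S, ∃ d ∈ S, z = a * (b * c - c * b) * d}

variable (H : Type u) [Ring H] [HopfAlgebra K H]

/-- `U^{⊗n} ⊆ H^{⊗n}` as a submodule. -/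
noncomputable def US (U : Subalgebra K H) : (n : ℕ) → Submodule K (TPb K H n).T
  | 0 => ⊤
  | n+1 => tpSubM K (US U n) U.toSubmodule

end defs2

/-!
For a subalgebra `S ⊆ A` put `W(S) = S ⊗ S + A ⊗ [S,S]` (`coisoSpace K S`), so that right strong
coisotropy of `S` means `Δ(S) ⊆ W(S)`. Because `[S,S]` is an ideal of `S`, `W(S)` is closed under
multiplication, and `f ⊗ g` carries it into `W(S')` whenever `f` and `g` map `S` into `S'` and `g`
is multiplicative. Now `Δ(U^{⊗m}) ⊆ U^{⊗m} ⊗ U^{⊗m}`, and `Twiᵐ(R)` is a product of images of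
`R ∈ W(U)` under algebra maps sending `U` into `U^{⊗m}`, so it lies in `W(U^{⊗m})`. Its inverse is
the reversed product of the images of `R⁻¹`, and by the hexagon identity `R⁻¹ = (antipode ⊗ I)(R)`,
which lies in `W(U)` because `U` is stable under the antipode. Hence
`Twiᵐ(R)⁻¹ Δ(z) Twiᵐ(R) ∈ W(U^{⊗m})`.
-/

section TensorSubmodule

variable {K : Type u} [Field K]

section Module

variable {M N M' N' : Type u} [AddCommMonoid M] [Module K M] [AddCommMonoid N] [Module K N]
  [AddCommMonoid M'] [Module K M'] [AddCommMonoid N'] [Module K N']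

lemma tmul_mem_tpSubM {p : Submodule K M} {q : Submodule K N} {x : M} {y : N}
    (hx : x ∈ p) (hy : y ∈ q) : x ⊗ₜ[K] y ∈ tpSubM K p q :=
  Submodule.apply_mem_map₂ _ hx hy

lemma tpSubM_le {p : Submodule K M} {q : Submodule K N} {r : Submodule K (M ⊗[K] N)}
    (h : ∀ x ∈ p, ∀ y ∈ q, x ⊗ₜ[K] y ∈ r) : tpSubM K p q ≤ r :=
  Submodule.map₂_le.mpr h

lemma tpSubM_mono {p p' : Submodule K M} {q q' : Submodule K N} (hp : p ≤ p') (hq : q ≤ q') :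
    tpSubM K p q ≤ tpSubM K p' q' :=
  tpSubM_le fun _ hx _ hy => tmul_mem_tpSubM (hp hx) (hq hy)

lemma map_mem_tpSubM {p : Submodule K M} {q : Submodule K N} {p' : Submodule K M'}
    {q' : Submodule K N'} {f : M →ₗ[K] M'} {g : N →ₗ[K] N'} (hf : p ≤ p'.comap f)
    (hg : q ≤ q'.comap g) {x : M ⊗[K] N} (hx : x ∈ tpSubM K p q) :
    TensorProduct.map f g x ∈ tpSubM K p' q' := by
  refine tpSubM_le (r := (tpSubM K p' q').comap (TensorProduct.map f g)) (fun a ha b hb => ?_) hx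
  exact tmul_mem_tpSubM (hf ha) (hg hb)

lemma one_tmul_one_mem_tpSubM {A B : Type u} [Ring A] [Algebra K A] [Ring B] [Algebra K B]
    {p : Submodule K A} {q : Submodule K B} (hp : 1 ∈ p) (hq : 1 ∈ q) :
    (1 : A ⊗[K] B) ∈ tpSubM K p q :=
  tmul_mem_tpSubM hp hq

lemma tpSubM_tpSubM_eq_range {A A' B B' : Type u} [AddCommMonoid A] [Module K A]
    [AddCommMonoid A'] [Module K A'] [AddCommMonoid B] [Module K B] [AddCommMonoid B']
    [Module K B'] (p : Submodule K A) (q : Submodule K A') (p' : Submodule K B)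
    (q' : Submodule K B') :
    tpSubM K (tpSubM K p q) (tpSubM K p' q') =
      LinearMap.range (TensorProduct.map (TensorProduct.mapIncl p q)
        (TensorProduct.mapIncl p' q')) := by
  rw [TensorProduct.range_map, TensorProduct.range_mapIncl, TensorProduct.range_mapIncl]
  rfl

lemma tensorTensorTensorComm_mem_tpSubM {A A' B B' : Type u} [AddCommMonoid A] [Module K A]
    [AddCommMonoid A'] [Module K A'] [AddCommMonoid B] [Module K B] [AddCommMonoid B']
    [Module K B'] {p : Submodule K A} {q : Submodule K A'} {p' : Submodule K B}
    {q' : Submodule K B'} {x : (A ⊗[K] A') ⊗[K] (B ⊗[K] B')}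
    (hx : x ∈ tpSubM K (tpSubM K p q) (tpSubM K p' q')) :
    TensorProduct.tensorTensorTensorComm K A A' B B' x
      ∈ tpSubM K (tpSubM K p p') (tpSubM K q q') := by
  rw [tpSubM_tpSubM_eq_range] at hx ⊢
  obtain ⟨y, rfl⟩ := hx
  exact ⟨TensorProduct.tensorTensorTensorComm K _ _ _ _ y,
    (LinearMap.congr_fun (TensorProduct.tensorTensorTensorComm_comp_map _ _ _ _ _) y).symm⟩

end Module

variable {A B : Type u} [Ring A] [Algebra K A] [Ring B] [Algebra K B]

lemma tpSubM_mul_tpSubM_le {p p' : Submodule K A} {q q' : Submodule K B} :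
    tpSubM K p q * tpSubM K p' q' ≤ tpSubM K (p * p') (q * q') := by
  simp only [tpSubM, Submodule.map₂_eq_span_image2, Submodule.span_mul_span, Submodule.span_le]
  rintro _ ⟨_, ⟨a, ha, b, hb, rfl⟩, _, ⟨a', ha', b', hb', rfl⟩, rfl⟩
  exact Submodule.subset_span ⟨a * a', Submodule.mul_mem_mul ha ha', b * b',
    Submodule.mul_mem_mul hb hb', (Algebra.TensorProduct.tmul_mul_tmul _ _ _ _).symm⟩

end TensorSubmodule

section CommIdeal

variable {K : Type u} [Field K] {A B : Type u} [Ring A] [Algebra K A] [Ring B] [Algebra K B]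
  {S : Submodule K A}

lemma commIdealS_le (hS : S * S ≤ S) : commIdealS K S ≤ S := by
  rw [commIdealS, Submodule.span_le]
  rintro _ ⟨a, ha, b, hb, c, hc, d, hd, rfl⟩
  have hmul {x y : A} (hx : x ∈ S) (hy : y ∈ S) : x * y ∈ S := hS (Submodule.mul_mem_mul hx hy)
  exact hmul (hmul ha (S.sub_mem (hmul hb hc) (hmul hc hb))) hd

lemma mul_commIdealS_le (hS : S * S ≤ S) : S * commIdealS K S ≤ commIdealS K S := by
  calc S * commIdealS K S = Submodule.span K S * commIdealS K S := by rw [Submodule.span_eq]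
    _ ≤ commIdealS K S := by
      rw [commIdealS, Submodule.span_mul_span, Submodule.span_le]
      rintro _ ⟨u, hu, _, ⟨a, ha, b, hb, c, hc, d, hd, rfl⟩, rfl⟩
      exact Submodule.subset_span
        ⟨u * a, hS (Submodule.mul_mem_mul hu ha), b, hb, c, hc, d, hd, by noncomm_ring⟩

lemma commIdealS_mul_le (hS : S * S ≤ S) : commIdealS K S * S ≤ commIdealS K S := by
  calc commIdealS K S * S = commIdealS K S * Submodule.span K S := by rw [Submodule.span_eq]
    _ ≤ commIdealS K S := by
      rw [commIdealS, Submodule.span_mul_span, Submodule.span_le]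
      rintro _ ⟨_, ⟨a, ha, b, hb, c, hc, d, hd, rfl⟩, u, hu, rfl⟩
      exact Submodule.subset_span
        ⟨a, ha, b, hb, c, hc, d * u, hS (Submodule.mul_mem_mul hd hu), by noncomm_ring⟩

lemma commIdealS_le_comap {S' : Submodule K B} (φ : A →ₐ[K] B) (h : S ≤ S'.comap φ.toLinearMap) :
    commIdealS K S ≤ (commIdealS K S').comap φ.toLinearMap := by
  rw [commIdealS, Submodule.span_le]
  rintro _ ⟨a, ha, b, hb, c, hc, d, hd, rfl⟩
  exact Submodule.subset_span ⟨φ a, h ha, φ b, h hb, φ c, h hc, φ d, h hd, by simp⟩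

end CommIdeal

noncomputable def coisoSpace (K : Type u) [Field K] {A : Type u} [Ring A] [Algebra K A]
    (S : Submodule K A) : Submodule K (A ⊗[K] A) :=
  tpSubM K S S ⊔ tpSubM K ⊤ (commIdealS K S)

section CoisoSpace

variable {K : Type u} [Field K] {A B : Type u} [Ring A] [Algebra K A] [Ring B] [Algebra K B]
  {S : Submodule K A} {S' : Submodule K B}

lemma one_mem_coisoSpace (h : (1 : A) ∈ S) : (1 : A ⊗[K] A) ∈ coisoSpace K S :=
  Submodule.mem_sup_left (one_tmul_one_mem_tpSubM h h)

lemma coisoSpace_mul_le (hS : S * S ≤ S) :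
    coisoSpace K S * coisoSpace K S ≤ coisoSpace K S := by
  have hC : commIdealS K S ≤ S := commIdealS_le hS
  have hCC : commIdealS K S * commIdealS K S ≤ commIdealS K S :=
    (mul_le_mul' le_rfl hC).trans (commIdealS_mul_le hS)
  have hcomm (p q : Submodule K A) (hq : q ≤ commIdealS K S) :
      tpSubM K p q ≤ coisoSpace K S :=
    le_sup_of_le_right (tpSubM_mono le_top hq)
  rw [coisoSpace, Submodule.sup_mul, Submodule.mul_sup, Submodule.mul_sup]
  refine sup_le (sup_le ?_ ?_) (sup_le ?_ ?_)
  · exact le_sup_of_le_left (tpSubM_mul_tpSubM_le.trans (tpSubM_mono hS hS))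
  · exact tpSubM_mul_tpSubM_le.trans (hcomm _ _ (mul_commIdealS_le hS))
  · exact tpSubM_mul_tpSubM_le.trans (hcomm _ _ (commIdealS_mul_le hS))
  · exact tpSubM_mul_tpSubM_le.trans (hcomm _ _ hCC)

lemma mul_mem_coisoSpace (hS : S * S ≤ S) {x y : A ⊗[K] A} (hx : x ∈ coisoSpace K S)
    (hy : y ∈ coisoSpace K S) : x * y ∈ coisoSpace K S :=
  coisoSpace_mul_le hS (Submodule.mul_mem_mul hx hy)

lemma map_mem_coisoSpace {f g : A →ₗ[K] B} (hf : S ≤ S'.comap f) (hg : S ≤ S'.comap g)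
    (hgc : commIdealS K S ≤ (commIdealS K S').comap g) {x : A ⊗[K] A}
    (hx : x ∈ coisoSpace K S) : TensorProduct.map f g x ∈ coisoSpace K S' := by
  obtain ⟨x₁, hx₁, x₂, hx₂, rfl⟩ := Submodule.mem_sup.mp hx
  rw [map_add]
  exact add_mem (Submodule.mem_sup_left (map_mem_tpSubM hf hg hx₁))
    (Submodule.mem_sup_right (map_mem_tpSubM (fun _ _ => Submodule.mem_top) hgc hx₂))

lemma algHom_map_mem_coisoSpace {f g : A →ₐ[K] B} (hf : S ≤ S'.comap f.toLinearMap)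
    (hg : S ≤ S'.comap g.toLinearMap) {x : A ⊗[K] A} (hx : x ∈ coisoSpace K S) :
    Algebra.TensorProduct.map f g x ∈ coisoSpace K S' :=
  map_mem_coisoSpace hf hg (commIdealS_le_comap g hg) hx

end CoisoSpace

section TensorPower

variable {K H : Type u} [Field K] [Ring H] [HopfAlgebra K H]

variable (K H) in
noncomputable def iterComulAlgHom : (n : ℕ) → H →ₐ[K] (TPb K H n).T
  | 0 => Bialgebra.counitAlgHom K H
  | n+1 => (Algebra.TensorProduct.map (iterComulAlgHom n) (AlgHom.id K H)).comp
      (Bialgebra.comulAlgHom K H)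

lemma Dm_eq_iterComulAlgHom : ∀ n, Dm K H n = (iterComulAlgHom K H n).toLinearMap
  | 0 => rfl
  | n+1 => by
    show TensorProduct.map (Dm K H n) LinearMap.id ∘ₗ Coalgebra.comul = _
    rw [Dm_eq_iterComulAlgHom n]
    rfl

variable {U : Subalgebra K H}

lemma one_mem_US : ∀ n, (1 : (TPb K H n).T) ∈ US K H U n
  | 0 => trivial
  | n+1 => one_tmul_one_mem_tpSubM (one_mem_US n) U.one_mem

lemma US_mul_US_le : ∀ n, US K H U n * US K H U n ≤ US K H U n
  | 0 => le_top
  | n+1 => tpSubM_mul_tpSubM_le.trans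
      (tpSubM_mono (US_mul_US_le n) U.isIdempotentElem_toSubmodule.eq.le)

lemma Dm_mem_US
    (hUΔ : ∀ u ∈ U, Coalgebra.comul (R := K) u ∈ tpSubM K U.toSubmodule U.toSubmodule) :
    ∀ n, U.toSubmodule ≤ (US K H U n).comap (Dm K H n)
  | 0 => fun _ _ => trivial
  | n+1 => fun u hu => map_mem_tpSubM (Dm_mem_US hUΔ n) le_rfl (hUΔ u hu)

lemma comul_mem_tpSubM_US
    (hUΔ : ∀ u ∈ U, Coalgebra.comul (R := K) u ∈ tpSubM K U.toSubmodule U.toSubmodule) :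
    ∀ n, ∀ z ∈ US K H U n, Coalgebra.comul (R := K) z ∈ tpSubM K (US K H U n) (US K H U n)
  | 0 => fun _ _ => tmul_mem_tpSubM trivial trivial
  | n+1 => fun _ hz => by
    refine tpSubM_le (r := (tpSubM K (US K H U (n+1)) (US K H U (n+1))).comap
      (Coalgebra.comul (R := K))) (fun a ha u hu => ?_) hz
    show TensorProduct.tensorTensorTensorComm K _ _ _ _
      (TensorProduct.map Coalgebra.comul Coalgebra.comul (a ⊗ₜ[K] u))
        ∈ tpSubM K (US K H U (n+1)) (US K H U (n+1))
    exact tensorTensorTensorComm_mem_tpSubM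
      (tmul_mem_tpSubM (comul_mem_tpSubM_US hUΔ n a ha) (hUΔ u hu))

end TensorPower

section Twist

variable {K H : Type u} [Field K] [Ring H] [HopfAlgebra K H]

variable (K H) in
noncomputable def twistIncl (n : ℕ) :
    (TPb K H n).T ⊗[K] (TPb K H n).T →ₐ[K] (TPb K H (n+1)).T ⊗[K] (TPb K H (n+1)).T :=
  Algebra.TensorProduct.map Algebra.TensorProduct.includeLeft
    Algebra.TensorProduct.includeLeft

variable (K H) in
noncomputable def twistLeg (n : ℕ) :
    H ⊗[K] H →ₐ[K] (TPb K H (n+1)).T ⊗[K] (TPb K H (n+1)).T :=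
  Algebra.TensorProduct.map Algebra.TensorProduct.includeRight
    (Algebra.TensorProduct.includeLeft.comp (iterComulAlgHom K H n))

lemma Twi_succ (R : H ⊗[K] H) (n : ℕ) :
    Twi K H R (n+1) = twistIncl K H n (Twi K H R n) * twistLeg K H n R := by
  rw [Twi]
  congr 1
  induction R using TensorProduct.induction_on with
  | zero => rfl
  | tmul x y =>
    simp only [twistLeg, Dm_eq_iterComulAlgHom, Algebra.TensorProduct.map_tmul, map_tmul,
      Algebra.TensorProduct.includeRight_apply, Algebra.TensorProduct.includeLeft_apply,
      AlgHom.toLinearMap_apply, map_one, LinearMap.id_coe, id_eq]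
    rfl
  | add x y hx hy => simp only [map_add, hx, hy]; rfl

variable (K H) in
noncomputable def twiInv (Rinv : H ⊗[K] H) : (n : ℕ) → (TPb K H n).T ⊗[K] (TPb K H n).T
  | 0 => 1
  | n+1 => twistLeg K H n Rinv * twistIncl K H n (twiInv Rinv n)

lemma Twi_mul_twiInv {R Rinv : H ⊗[K] H} (h : R * Rinv = 1) :
    ∀ n, Twi K H R n * twiInv K H Rinv n = 1
  | 0 => one_mul 1
  | n+1 => by
    rw [Twi_succ, twiInv]
    calc twistIncl K H n (Twi K H R n) * twistLeg K H n R *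
          (twistLeg K H n Rinv * twistIncl K H n (twiInv K H Rinv n))
        = twistIncl K H n (Twi K H R n) * twistLeg K H n (R * Rinv) *
          twistIncl K H n (twiInv K H Rinv n) := by rw [map_mul]; noncomm_ring
      _ = 1 := by rw [h, map_one, mul_one, ← map_mul, Twi_mul_twiInv h n, map_one]

variable {U : Subalgebra K H}

lemma twistIncl_mem_coisoSpace (n : ℕ) {x : (TPb K H n).T ⊗[K] (TPb K H n).T}
    (hx : x ∈ coisoSpace K (US K H U n)) :
    twistIncl K H n x ∈ coisoSpace K (US K H U (n+1)) :=
  have hincl : US K H U n ≤ (US K H U (n+1)).comap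
      (Algebra.TensorProduct.includeLeft (S := K) (B := H)).toLinearMap :=
    fun _ ha => tmul_mem_tpSubM ha U.one_mem
  algHom_map_mem_coisoSpace hincl hincl hx

lemma twistLeg_mem_coisoSpace
    (hUΔ : ∀ u ∈ U, Coalgebra.comul (R := K) u ∈ tpSubM K U.toSubmodule U.toSubmodule)
    (n : ℕ) {x : H ⊗[K] H} (hx : x ∈ coisoSpace K U.toSubmodule) :
    twistLeg K H n x ∈ coisoSpace K (US K H U (n+1)) := by
  have hright : U.toSubmodule ≤ (US K H U (n+1)).comap
      (Algebra.TensorProduct.includeRight (R := K) (A := (TPb K H n).T)).toLinearMap :=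
    fun _ ha => tmul_mem_tpSubM (one_mem_US n) ha
  have hcomul : U.toSubmodule ≤ (US K H U (n+1)).comap
      (Algebra.TensorProduct.includeLeft.comp (iterComulAlgHom K H n)).toLinearMap := by
    intro b hb
    refine tmul_mem_tpSubM ?_ U.one_mem
    simpa [Dm_eq_iterComulAlgHom] using Dm_mem_US hUΔ n hb
  exact algHom_map_mem_coisoSpace hright hcomul hx

lemma Twi_mem_coisoSpace
    (hUΔ : ∀ u ∈ U, Coalgebra.comul (R := K) u ∈ tpSubM K U.toSubmodule U.toSubmodule)
    {R : H ⊗[K] H} (hR : R ∈ coisoSpace K U.toSubmodule) :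
    ∀ n, Twi K H R n ∈ coisoSpace K (US K H U n)
  | 0 => one_mem_coisoSpace (one_mem_US 0)
  | n+1 => by
    rw [Twi_succ]
    exact mul_mem_coisoSpace (US_mul_US_le _)
      (twistIncl_mem_coisoSpace n (Twi_mem_coisoSpace hUΔ hR n))
      (twistLeg_mem_coisoSpace hUΔ n hR)

lemma twiInv_mem_coisoSpace
    (hUΔ : ∀ u ∈ U, Coalgebra.comul (R := K) u ∈ tpSubM K U.toSubmodule U.toSubmodule)
    {Rinv : H ⊗[K] H} (hR : Rinv ∈ coisoSpace K U.toSubmodule) :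
    ∀ n, twiInv K H Rinv n ∈ coisoSpace K (US K H U n)
  | 0 => one_mem_coisoSpace (one_mem_US 0)
  | n+1 => mul_mem_coisoSpace (US_mul_US_le _) (twistLeg_mem_coisoSpace hUΔ n hR)
      (twistIncl_mem_coisoSpace n (twiInv_mem_coisoSpace hUΔ hR n))

end Twist

section RMatrix

variable {K H : Type u} [Field K] [Ring H] [HopfAlgebra K H]

lemma rTensor_mul'_rTensor_assoc_symm_mul (φ : H →ₗ[K] H) (x y : H ⊗[K] H) :
    LinearMap.rTensor H (LinearMap.mul' K H ∘ₗ LinearMap.rTensor H φ)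
      ((Algebra.TensorProduct.assoc K K K H H H).symm
        (Algebra.TensorProduct.map (AlgHom.id K H) Algebra.TensorProduct.includeRight x
          * (Algebra.TensorProduct.includeRight : H ⊗[K] H →ₐ[K] H ⊗[K] (H ⊗[K] H)) y))
      = LinearMap.rTensor H φ x * y := by
  induction x using TensorProduct.induction_on with
  | zero => simp
  | add x₁ x₂ h₁ h₂ => simp only [map_add, add_mul, h₁, h₂]
  | tmul a b =>
    induction y using TensorProduct.induction_on with
    | zero => simp
    | add y₁ y₂ h₁ h₂ => simp only [map_add, mul_add, h₁, h₂]
    | tmul c d => simp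

namespace QuasiTriangular

variable (Q : QuasiTriangular K H)

/-- The hexagon identity `(Δ ⊗ I)(R) = R₁₃R₂₃`, contracted along `m ∘ (φ ⊗ I)`. -/
lemma rTensor_comul_R (φ : H →ₗ[K] H) :
    LinearMap.rTensor H ((LinearMap.mul' K H ∘ₗ LinearMap.rTensor H φ) ∘ₗ Coalgebra.comul) Q.R
      = LinearMap.rTensor H φ Q.R * Q.R := by
  rw [LinearMap.rTensor_comp, LinearMap.comp_apply,
    ← (Algebra.TensorProduct.assoc K K K H H H).symm_apply_apply
      (LinearMap.rTensor H Coalgebra.comul Q.R), Q.hex2]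
  exact rTensor_mul'_rTensor_assoc_symm_mul φ Q.R Q.R

lemma eq_one_of_mul_R_eq_R {x : H ⊗[K] H} (h : x * Q.R = Q.R) : x = 1 :=
  calc x = x * Q.R * Q.Rinv := by rw [mul_assoc, Q.mul_inv, mul_one]
    _ = 1 := by rw [h, Q.mul_inv]

lemma rTensor_counit_R :
    LinearMap.rTensor H (Algebra.linearMap K H ∘ₗ Coalgebra.counit) Q.R = 1 := by
  refine Q.eq_one_of_mul_R_eq_R ?_
  have hcounit : (LinearMap.mul' K H ∘ₗ
      LinearMap.rTensor H (Algebra.linearMap K H ∘ₗ Coalgebra.counit)) ∘ₗ Coalgebra.comul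
        = LinearMap.id := by
    ext a
    simp only [LinearMap.comp_apply, LinearMap.rTensor_comp_apply,
      Coalgebra.rTensor_counit_comul, LinearMap.rTensor_tmul, LinearMap.mul'_apply,
      Algebra.linearMap_apply, map_one, one_mul, LinearMap.id_apply]
  rw [← Q.rTensor_comul_R, hcounit, LinearMap.rTensor_id, LinearMap.id_apply]

lemma rTensor_antipode_R :
    LinearMap.rTensor H (HopfAlgebra.antipode K) Q.R = Q.Rinv := by
  have h := Q.rTensor_comul_R (HopfAlgebra.antipode K)
  rw [LinearMap.comp_assoc, HopfAlgebra.mul_antipode_rTensor_comul, Q.rTensor_counit_R] at h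
  exact left_inv_eq_right_inv h.symm Q.mul_inv

lemma Rinv_mem_coisoSpace {U : Subalgebra K H} (hUS : ∀ u ∈ U, HopfAlgebra.antipode K u ∈ U)
    (hR : Q.R ∈ coisoSpace K U.toSubmodule) : Q.Rinv ∈ coisoSpace K U.toSubmodule := by
  rw [← Q.rTensor_antipode_R]
  exact map_mem_coisoSpace (g := LinearMap.id) hUS le_rfl le_rfl hR

end QuasiTriangular

end RMatrix

theorem stmt18_general {K H : Type u} [Field K] [Ring H] [HopfAlgebra K H]
    (Q : QuasiTriangular K H)
    -- U is a Hopf subalgebra of H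
    (U : Subalgebra K H)
    (hUΔ : ∀ u ∈ U, Coalgebra.comul (R := K) u ∈ tpSubM K U.toSubmodule U.toSubmodule)
    (hUS : ∀ u ∈ U, HopfAlgebra.antipode (R := K) u ∈ U)
    -- with R ∈ U ⊗ U + H ⊗ [U,U]
    (hR : Q.R ∈ tpSubM K U.toSubmodule U.toSubmodule
      ⊔ tpSubM K ⊤ (commIdealS K U.toSubmodule))
    (m : ℕ) :
    -- U^{⊗m} is right strongly coisotropic in (H^{⊗m})_{Twiᵐ(R)}, whose
    -- comultiplication is Δ_J = J⁻¹ Δ_{H^{⊗m}} J with J = Twiᵐ(R):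
    ∀ z ∈ US K H U m, ∀ Ji : (TPb K H m).T ⊗[K] (TPb K H m).T,
      Twi K H Q.R m * Ji = 1 → Ji * Twi K H Q.R m = 1 →
      Ji * Coalgebra.comul (R := K) z * Twi K H Q.R m ∈
        tpSubM K (US K H U m) (US K H U m)
          ⊔ tpSubM K ⊤ (commIdealS K (US K H U m)) := by
  intro z hz Ji _ hJi
  obtain rfl : Ji = twiInv K H Q.Rinv m :=
    left_inv_eq_right_inv hJi (Twi_mul_twiInv Q.mul_inv m)
  have hmul : US K H U m * US K H U m ≤ US K H U m := US_mul_US_le m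
  refine mul_mem_coisoSpace hmul (mul_mem_coisoSpace hmul ?_ ?_) (Twi_mem_coisoSpace hUΔ hR m)
  · exact twiInv_mem_coisoSpace hUΔ (Q.Rinv_mem_coisoSpace hUS hR) m
  · exact Submodule.mem_sup_left (comul_mem_tpSubM_US hUΔ m z hz)

theorem stmt18 {K H : Type u} [Field K] [Ring H] [HopfAlgebra K H]
    (Q : QuasiTriangular K H)
    -- U is a Hopf subalgebra of H
    (U : Subalgebra K H)
    (hUΔ : ∀ u ∈ U, Coalgebra.comul (R := K) u ∈ tpSubM K U.toSubmodule U.toSubmodule)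
    (hUS : ∀ u ∈ U, HopfAlgebra.antipode (R := K) u ∈ U)
    -- with R ∈ U ⊗ U + H ⊗ [U,U]
    (hR : Q.R ∈ tpSubM K U.toSubmodule U.toSubmodule
      ⊔ tpSubM K ⊤ (commIdealS K U.toSubmodule))
    (m : ℕ) (hm : 1 ≤ m) :
    -- U^{⊗m} is right strongly coisotropic in (H^{⊗m})_{Twiᵐ(R)}, whose
    -- comultiplication is Δ_J = J⁻¹ Δ_{H^{⊗m}} J with J = Twiᵐ(R):
    ∀ z ∈ US K H U m, ∀ Ji : (TPb K H m).T ⊗[K] (TPb K H m).T,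
      Twi K H Q.R m * Ji = 1 → Ji * Twi K H Q.R m = 1 →
      Ji * Coalgebra.comul (R := K) z * Twi K H Q.R m ∈
        tpSubM K (US K H U m) (US K H U m)
          ⊔ tpSubM K ⊤ (commIdealS K (US K H U m)) :=
  stmt18_general Q U hUΔ hUS hR m
end

section
/- For the inductively defined twists Twiᵐ(R) of a quasitriangular Hopf algebra (H, R), one has the closed formula Twiᵐ(R) = ∏_{k=2}^{m} ∏_{l=k-1}^{1} R_{k, m+l} in H^{⊗2m}, where the outer product is in increasing order of k, the inner product in decreasing order of l, and R_{ij} is R placed in tensor positions i and j. -/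
open TensorProduct

universe u

variable (K H : Type u) [Field K] [Ring H] [HopfAlgebra K H]

/-- the closed formula `∏_{k=2}^{m} ∏_{l=k-1}^{1} R_{k, m+l}` (outer product in
increasing `k`, inner product in decreasing `l`), an element of `H^{⊗m} ⊗ H^{⊗m}`,
where `R_{k, m+l}` places the two legs of `R` in tensor positions `k` and `m + l`. -/
noncomputable def closedTwi (R : H ⊗[K] H) (m : ℕ) : (TPb K H m).T ⊗[K] (TPb K H m).T :=
  ((List.range (m - 1)).map (fun k' =>
    (((List.range (k' + 1)).reverse).map (fun l' =>
      TensorProduct.map (pos K H m (k' + 2)) (pos K H m (l' + 1)) R)).prod)).prod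

/-! Induction on `m`. The recursion multiplies `Twiᵐ(R)` by `(Δ^{(m)} ⊗ I ⊗ Δ^{(m)} ⊗ I)(R₂₃)`,
which is `R` with its first leg in position `m + 1` and its second leg spread by `Δ^{(m)}` over
positions `m + 2, …, 2m + 1`. Iterating the hexagon identity `(I ⊗ Δ)(R) = R₁₃R₁₂` gives
`(I ⊗ Δ^{(m)})(R) = R_{1,m} ⋯ R_{1,1}`, so this factor is exactly the row
`∏_{l=m}^{1} R_{m+1, (m+1)+l}` appended to the closed formula when passing from `m` to `m + 1`. -/

theorem Algebra.TensorProduct.map_apply_eq_tensorProductMap {R A B C D : Type*} [CommSemiring R]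
    [Semiring A] [Semiring B] [Semiring C] [Semiring D]
    [Algebra R A] [Algebra R B] [Algebra R C] [Algebra R D]
    (φ : A →ₐ[R] C) (ψ : B →ₐ[R] D) (x : A ⊗[R] B) :
    Algebra.TensorProduct.map φ ψ x = _root_.TensorProduct.map φ.toLinearMap ψ.toLinearMap x :=
  rfl

section

variable {K H : Type u} [Field K] [Ring H] [HopfAlgebra K H]

variable (K H) in
noncomputable def DmAlgHom : (n : ℕ) → H →ₐ[K] (TPb K H n).T
  | 0 => Bialgebra.counitAlgHom K H
  | n+1 => (Algebra.TensorProduct.map (DmAlgHom n) (AlgHom.id K H)).comp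
      (Bialgebra.comulAlgHom K H)

theorem toLinearMap_DmAlgHom (n : ℕ) : (DmAlgHom K H n).toLinearMap = Dm K H n := by
  induction n with
  | zero => rfl
  | succ n ih =>
    rw [Dm, ← ih]
    rfl

theorem pos_self (n : ℕ) :
    pos K H (n + 1) (n + 1) = Algebra.TensorProduct.includeRight.toLinearMap := by
  rw [pos]
  exact if_pos rfl

theorem pos_succ_of_ne {n j : ℕ} (h : j ≠ n + 1) :
    pos K H (n + 1) j = Algebra.TensorProduct.includeLeft.toLinearMap ∘ₗ pos K H n j := by
  rw [pos]
  exact if_neg h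

theorem map_id_includeLeft_lTensor_pos {n j : ℕ} (hj : j ≠ n + 1) (x : H ⊗[K] H) :
    Algebra.TensorProduct.map (AlgHom.id K H)
        (Algebra.TensorProduct.includeLeft : (TPb K H n).T →ₐ[K] (TPb K H n).T ⊗[K] H)
        (LinearMap.lTensor H (pos K H n j) x)
      = LinearMap.lTensor H (pos K H (n + 1) j) x := by
  rw [Algebra.TensorProduct.map_apply_eq_tensorProductMap, LinearMap.lTensor, LinearMap.lTensor,
    TensorProduct.map_map, pos_succ_of_ne hj]
  rfl

/-- `closedTwiRow R m k = ∏_{l=k}^{1} R_{k+1, m+l}`, so that `closedTwi R m` is the product of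
the rows `k = 1, …, m - 1`. -/
noncomputable def closedTwiRow (R : H ⊗[K] H) (m k : ℕ) : (TPb K H m).T ⊗[K] (TPb K H m).T :=
  ((List.range k).reverse.map fun l =>
    TensorProduct.map (pos K H m (k + 1)) (pos K H m (l + 1)) R).prod

theorem map_includeLeft_map_pos {n i j : ℕ} (hi : i ≠ n + 1) (hj : j ≠ n + 1) (x : H ⊗[K] H) :
    Algebra.TensorProduct.map
        (Algebra.TensorProduct.includeLeft : (TPb K H n).T →ₐ[K] (TPb K H n).T ⊗[K] H)
        (Algebra.TensorProduct.includeLeft : (TPb K H n).T →ₐ[K] (TPb K H n).T ⊗[K] H)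
        (TensorProduct.map (pos K H n i) (pos K H n j) x)
      = TensorProduct.map (pos K H (n + 1) i) (pos K H (n + 1) j) x := by
  rw [Algebra.TensorProduct.map_apply_eq_tensorProductMap, TensorProduct.map_map,
    pos_succ_of_ne hi, pos_succ_of_ne hj]
  rfl

theorem map_includeLeft_closedTwiRow (R : H ⊗[K] H) {n k : ℕ} (hk : k < n) :
    Algebra.TensorProduct.map
        (Algebra.TensorProduct.includeLeft : (TPb K H n).T →ₐ[K] (TPb K H n).T ⊗[K] H)
        (Algebra.TensorProduct.includeLeft : (TPb K H n).T →ₐ[K] (TPb K H n).T ⊗[K] H)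
        (closedTwiRow R n k)
      = closedTwiRow R (n + 1) k := by
  rw [closedTwiRow, map_list_prod, List.map_map]
  refine congrArg List.prod (List.map_congr_left fun l hl => ?_)
  have : l < k := by simpa using hl
  exact map_includeLeft_map_pos (by omega) (by omega) R

theorem closedTwi_succ (R : H ⊗[K] H) (n : ℕ) :
    closedTwi K H R (n + 1)
      = (Algebra.TensorProduct.map
          (Algebra.TensorProduct.includeLeft : (TPb K H n).T →ₐ[K] (TPb K H n).T ⊗[K] H)
          (Algebra.TensorProduct.includeLeft : (TPb K H n).T →ₐ[K] (TPb K H n).T ⊗[K] H)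
          : (TPb K H n).T ⊗[K] (TPb K H n).T →ₐ[K] (TPb K H (n + 1)).T ⊗[K] (TPb K H (n + 1)).T)
          (closedTwi K H R n)
        * closedTwiRow R (n + 1) n := by
  cases n with
  | zero => simp [closedTwi, closedTwiRow]
  | succ n =>
    change ((List.range (n + 1)).map fun k => closedTwiRow R (n + 2) (k + 1)).prod = _ * _
    rw [closedTwi, Nat.add_sub_cancel, map_list_prod, List.map_map, List.range_succ,
      List.map_append, List.prod_append, List.map_singleton, List.prod_singleton]
    refine congrArg (· * _) (congrArg List.prod (List.map_congr_left fun k hk => ?_))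
    exact (map_includeLeft_closedTwiRow R (by simpa using hk)).symm

namespace QuasiTriangular

variable (Q : QuasiTriangular K H)

theorem isUnit_R : IsUnit Q.R := ⟨⟨Q.R, Q.Rinv, Q.mul_inv, Q.inv_mul⟩, rfl⟩

theorem lTensor_counit_R : LinearMap.lTensor H (Coalgebra.counit (R := K) (A := H)) Q.R = 1 := by
  set u := LinearMap.lTensor H (Coalgebra.counit (R := K) (A := H)) Q.R
  -- `ε₂ ∘ Δ = ε` and `ε₂ (1 ⊗ b) = ε₂ (b ⊗ 1) = ε b`, so `I ⊗ ε₂` turns the hexagon identity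
  -- into `u = u * u`, and an idempotent unit is `1`.
  let ε₂ : H ⊗[K] H →ₐ[K] K :=
    (Algebra.TensorProduct.lmul' K).comp
      (Algebra.TensorProduct.map (Bialgebra.counitAlgHom K H) (Bialgebra.counitAlgHom K H))
  let α := Algebra.TensorProduct.map (AlgHom.id K H) ε₂
  have hunit : IsUnit u :=
    Q.isUnit_R.map (Algebra.TensorProduct.map (AlgHom.id K H) (Bialgebra.counitAlgHom K H))
  have hΔ : α (LinearMap.lTensor H Coalgebra.comul Q.R) = u := by
    simp only [α, Algebra.TensorProduct.map_apply_eq_tensorProductMap, LinearMap.lTensor,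
      TensorProduct.map_map]
    refine congrArg₂ (fun f g => TensorProduct.map f g Q.R) (by ext; simp) ?_
    ext b
    change Algebra.TensorProduct.lmul' K (TensorProduct.map Coalgebra.counit Coalgebra.counit
      (Coalgebra.comul b)) = Coalgebra.counit (R := K) b
    rw [← LinearMap.rTensor_comp_lTensor, LinearMap.comp_apply, Coalgebra.lTensor_counit_comul]
    simp
  have h13 : α (Algebra.TensorProduct.map (AlgHom.id K H)
      Algebra.TensorProduct.includeRight Q.R) = u := by
    simp only [α, Algebra.TensorProduct.map_apply_eq_tensorProductMap, TensorProduct.map_map]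
    refine congrArg₂ (fun f g => TensorProduct.map f g Q.R) (by ext; simp) ?_
    ext b
    simp [ε₂]
  have h12 : α (Algebra.TensorProduct.map (AlgHom.id K H)
      Algebra.TensorProduct.includeLeft Q.R) = u := by
    simp only [α, Algebra.TensorProduct.map_apply_eq_tensorProductMap, TensorProduct.map_map]
    refine congrArg₂ (fun f g => TensorProduct.map f g Q.R) (by ext; simp) ?_
    ext b
    simp [ε₂]
  have hidem : IsIdempotentElem u := by
    have := congrArg α Q.hex1
    rwa [map_mul, hΔ, h13, h12, eq_comm] at this
  exact (IsIdempotentElem.iff_eq_one_of_isUnit hunit).mp hidem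

theorem lTensor_Dm_R (m : ℕ) :
    LinearMap.lTensor H (Dm K H m) Q.R
      = ((List.range m).reverse.map fun l =>
          LinearMap.lTensor H (pos K H m (l + 1)) Q.R).prod := by
  induction m with
  | zero => exact Q.lTensor_counit_R
  | succ m ih =>
    let Θ := Algebra.TensorProduct.map (AlgHom.id K H)
      (Algebra.TensorProduct.map (DmAlgHom K H m) (AlgHom.id K H))
    have hΔ : LinearMap.lTensor H (Dm K H (m + 1)) Q.R
        = Θ (LinearMap.lTensor H Coalgebra.comul Q.R) := by
      simp only [Θ, Algebra.TensorProduct.map_apply_eq_tensorProductMap, LinearMap.lTensor,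
        TensorProduct.map_map, Dm, Algebra.TensorProduct.toLinearMap_map,
        TensorProduct.AlgebraTensorModule.map_eq, toLinearMap_DmAlgHom, AlgHom.toLinearMap_id,
        LinearMap.comp_id]
      rfl
    have h13 : Θ (Algebra.TensorProduct.map (AlgHom.id K H)
        Algebra.TensorProduct.includeRight Q.R)
        = LinearMap.lTensor H (pos K H (m + 1) (m + 1)) Q.R := by
      simp only [Θ, Algebra.TensorProduct.map_apply_eq_tensorProductMap, LinearMap.lTensor,
        TensorProduct.map_map, pos_self]
      refine congrArg₂ (fun f g => TensorProduct.map f g Q.R) (by ext; simp) ?_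
      ext b
      simp
    have h12 : Θ (Algebra.TensorProduct.map (AlgHom.id K H)
        Algebra.TensorProduct.includeLeft Q.R)
        = Algebra.TensorProduct.map (AlgHom.id K H)
            (Algebra.TensorProduct.includeLeft : (TPb K H m).T →ₐ[K] (TPb K H m).T ⊗[K] H)
            (LinearMap.lTensor H (Dm K H m) Q.R) := by
      simp only [Θ, Algebra.TensorProduct.map_apply_eq_tensorProductMap, LinearMap.lTensor,
        TensorProduct.map_map]
      refine congrArg₂ (fun f g => TensorProduct.map f g Q.R) (by ext; simp) ?_
      ext b
      simp [← toLinearMap_DmAlgHom]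
    rw [hΔ, Q.hex1, map_mul, h13, h12, ih, map_list_prod, List.map_map,
      List.range_succ, List.reverse_append]
    simp only [List.reverse_singleton, List.singleton_append, List.map_cons, List.prod_cons]
    refine congrArg _ (congrArg List.prod (List.map_congr_left fun l hl => ?_))
    have : l < m := by simpa using hl
    exact map_id_includeLeft_lTensor_pos (by omega) Q.R

theorem map_Dm_R₂₃_eq_closedTwiRow (m : ℕ) :
    (TensorProduct.map (TensorProduct.map (Dm K H m) LinearMap.id)
        (TensorProduct.map (Dm K H m) LinearMap.id))
      (Algebra.TensorProduct.map
        (Algebra.TensorProduct.includeRight : H →ₐ[K] H ⊗[K] H)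
        (Algebra.TensorProduct.includeLeft : H →ₐ[K] H ⊗[K] H) Q.R)
      = closedTwiRow Q.R (m + 1) m := by
  let Ω := Algebra.TensorProduct.map
    (Algebra.TensorProduct.includeRight : H →ₐ[K] (TPb K H m).T ⊗[K] H)
    (Algebra.TensorProduct.includeLeft : (TPb K H m).T →ₐ[K] (TPb K H m).T ⊗[K] H)
  have hΩ : (TensorProduct.map (TensorProduct.map (Dm K H m) LinearMap.id)
        (TensorProduct.map (Dm K H m) LinearMap.id))
      (Algebra.TensorProduct.map
        (Algebra.TensorProduct.includeRight : H →ₐ[K] H ⊗[K] H)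
        (Algebra.TensorProduct.includeLeft : H →ₐ[K] H ⊗[K] H) Q.R)
      = Ω (LinearMap.lTensor H (Dm K H m) Q.R) := by
    simp only [Ω, Algebra.TensorProduct.map_apply_eq_tensorProductMap, LinearMap.lTensor,
      TensorProduct.map_map]
    refine congrArg₂ (fun f g => TensorProduct.map f g Q.R) ?_ (by ext; simp)
    ext a
    simp [← toLinearMap_DmAlgHom]
  rw [hΩ, Q.lTensor_Dm_R, map_list_prod, List.map_map, closedTwiRow]
  refine congrArg List.prod (List.map_congr_left fun l hl => ?_)
  have : l < m := by simpa using hl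
  simp only [Function.comp_apply, Ω, Algebra.TensorProduct.map_apply_eq_tensorProductMap,
    LinearMap.lTensor, TensorProduct.map_map, pos_self,
    pos_succ_of_ne (show l + 1 ≠ m + 1 by omega)]
  rfl

end QuasiTriangular

end

theorem stmt19 {K H : Type u} [Field K] [Ring H] [HopfAlgebra K H]
    (Q : QuasiTriangular K H) (m : ℕ) :
    Twi K H Q.R m = closedTwi K H Q.R m := by
  induction m with
  | zero => rfl
  | succ n ih =>
    rw [Twi, ih, Q.map_Dm_R₂₃_eq_closedTwiRow]
    exact (closedTwi_succ Q.R n).symm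
end
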